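/- arXiv:2105.04211 — 5 statements merged into one kernel-verified Lean document; each statement's English description precedes it below -/
import Mathlib

section
/- For smooth (e.g., piecewise linear) paths X, Y : [0,T] → R^d, the function U(s,t) = k(X|_{[0,s]}, Y|_{[0,t]}) = Σ_{j≥0} Σ_{|α|=j} S(X|_{[0,s]})^α S(Y|_{[0,t]})^α satisfies the hyperbolic PDE ∂²U/∂s∂t = (Ẋ_s · Ẏ_t) U with boundary conditions U(0,·) = 1 and U(·,0) = 1. -/
open MeasureTheory intervalIntegral

/-- Iterated-integral signature coefficient of a path `X : ℝ → (Fin d → ℝ)` over `[a, b]`. -/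
noncomputable def sig {d : ℕ} (X : ℝ → Fin d → ℝ) : List (Fin d) → ℝ → ℝ → ℝ
  | [], _, _ => 1
  | a :: w, s, t => ∫ u in s..t, deriv (fun r => X r a) u * sig X w u t

/-! The coefficient `sig X w 0 t` is differentiable in `t`: for `w = v ++ [a]` its derivative is
`Ẋᵃ_t * sig X v 0 t`, by the Leibniz rule for an integral whose upper limit and integrand both
depend on `t`, the boundary term vanishing because `sig X w t t = 0` for `w ≠ []`. Splitting off
the empty word, the kernel is `1 + ∑_{(v, a)} sig X (v ++ [a]) 0 s * sig Y (v ++ [a]) 0 t`, and the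
factorial decay `|sig X w 0 s| ≤ (C |s|)^|w| / |w|!` dominates the series of first and mixed
derivatives locally uniformly, so it can be differentiated termwise. The mixed derivative
`∑_{(v, a)} Ẋᵃ_s Ẏᵃ_t sig X v 0 s sig Y v 0 t` factors as `(Ẋ_s · Ẏ_t) U(s, t)`. On the boundary
only the empty word contributes. -/

open Set Filter Topology Interval

section LeibnizRule

variable {E : Type*} [NormedAddCommGroup E] [NormedSpace ℝ E]
  {f f' : ℝ → ℝ → E}

theorem hasDerivAt_integral_diag [CompleteSpace E] (hf : Continuous (Function.uncurry f))
    (t : ℝ) :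
    HasDerivAt (fun y => ∫ u in t..y, f u y) (f t t) t := by
  rw [hasDerivAt_iff_isLittleO, Asymptotics.isLittleO_iff]
  intro ε hε
  obtain ⟨δ, hδ, hfδ⟩ := Metric.continuousAt_iff.1 (hf.continuousAt (x := (t, t))) ε hε
  filter_upwards [Metric.ball_mem_nhds t hδ] with y hy
  have hint : IntervalIntegrable (fun u => f u y) volume t y :=
    (hf.comp (Continuous.prodMk_left y)).intervalIntegrable t y
  have hsub : (∫ u in t..y, f u y) - (∫ u in t..t, f u t) - (y - t) • f t t
      = ∫ u in t..y, (f u y - f t t) := by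
    rw [integral_same, sub_zero, integral_sub hint intervalIntegrable_const,
      intervalIntegral.integral_const]
  rw [hsub]
  refine intervalIntegral.norm_integral_le_of_norm_le_const fun u hu => ?_
  rw [← dist_eq_norm]
  refine (hfδ (x := (u, y)) ?_).le
  have hut : |u - t| ≤ |y - t| := abs_sub_left_of_mem_uIcc (uIoc_subset_uIcc hu)
  rw [Metric.mem_ball, Real.dist_eq] at hy
  simp only [Prod.dist_eq, Real.dist_eq, max_lt_iff]
  exact ⟨hut.trans_lt hy, hy⟩

theorem hasDerivAt_integral_of_continuous_deriv (hf : Continuous (Function.uncurry f))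
    (hf' : Continuous (Function.uncurry f')) (hd : ∀ u y, HasDerivAt (f u) (f' u y) y)
    (a b t : ℝ) :
    HasDerivAt (fun y => ∫ u in a..b, f u y) (∫ u in a..b, f' u t) t := by
  obtain ⟨M, hM⟩ := (isCompact_uIcc.prod (isCompact_closedBall t 1)).exists_bound_of_continuousOn
    hf'.continuousOn
  refine (hasDerivAt_integral_of_dominated_loc_of_deriv_le (bound := fun _ => M)
    (Metric.ball_mem_nhds t one_pos)
    (Eventually.of_forall fun y => (hf.comp (Continuous.prodMk_left y)).aestronglyMeasurable)
    ((hf.comp (Continuous.prodMk_left t)).intervalIntegrable a b)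
    (hf'.comp (Continuous.prodMk_left t)).aestronglyMeasurable ?_ intervalIntegrable_const
    (ae_of_all _ fun u _ y _ => hd u y)).2
  exact ae_of_all _ fun u hu y hy =>
    hM (u, y) ⟨uIoc_subset_uIcc hu, Metric.ball_subset_closedBall hy⟩

theorem hasDerivAt_integral_upper_param [CompleteSpace E] (hf : Continuous (Function.uncurry f))
    (hf' : Continuous (Function.uncurry f')) (hd : ∀ u y, HasDerivAt (f u) (f' u y) y)
    (a t : ℝ) :
    HasDerivAt (fun y => ∫ u in a..y, f u y) (f t t + ∫ u in a..t, f' u t) t := by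
  have hsplit : (fun y => ∫ u in a..y, f u y)
      = fun y => (∫ u in t..y, f u y) + ∫ u in a..t, f u y := by
    funext y
    rw [add_comm, integral_add_adjacent_intervals] <;>
      exact (hf.comp (Continuous.prodMk_left y)).intervalIntegrable _ _
  rw [hsplit]
  exact (hasDerivAt_integral_diag hf t).add
    (hasDerivAt_integral_of_continuous_deriv hf hf' hd a t t)

end LeibnizRule

theorem summable_pow_length_div_factorial {α : Type*} [Fintype α] {c : ℝ} (hc : 0 ≤ c) :
    Summable fun w : List α => c ^ w.length / w.length.factorial := by
  rw [← List.equivSigmaTuple.symm.summable_iff]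
  refine (summable_sigma_of_nonneg fun _ => ?_).2 ⟨fun _ => .of_finite, ?_⟩
  · simp only [Function.comp_apply]
    positivity
  simpa [List.equivSigmaTuple, Function.comp_def, mul_pow, mul_div_assoc]
    using Real.summable_pow_div_factorial (Fintype.card α * c)

theorem summable_pow_length_fst_div_factorial {α : Type*} [Fintype α] {c : ℝ} (hc : 0 ≤ c) :
    Summable fun p : List α × α => c ^ p.1.length / p.1.length.factorial := by
  simpa using (summable_pow_length_div_factorial hc).mul_of_nonneg
    (Summable.of_finite (f := fun _ : α => (1 : ℝ))) (fun _ => by positivity) (fun _ => zero_le_one)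

theorem tsum_list_eq_nil_add_tsum_append_singleton {α E : Type*} [AddCommGroup E]
    [TopologicalSpace E] [IsTopologicalAddGroup E] [T2Space E] {f : List α → E} (hf : Summable f) :
    ∑' w, f w = f [] + ∑' p : List α × α, f (p.1 ++ [p.2]) := by
  classical
  have hinj : Function.Injective fun p : List α × α => p.1 ++ [p.2] := fun p q h =>
    Prod.ext_iff.2 (List.append_singleton_inj.1 h)
  have hrange : Function.support (fun w => if w = [] then 0 else f w)
      ⊆ range fun p : List α × α => p.1 ++ [p.2] := by
    intro w hw
    obtain rfl | ⟨v, a, rfl⟩ := List.eq_nil_or_concat w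
    · simp at hw
    · exact ⟨(v, a), by simp⟩
  rw [hf.tsum_eq_add_tsum_ite [], ← hinj.tsum_eq hrange]
  simp

section Signature

variable {d : ℕ} {X : ℝ → Fin d → ℝ}

@[simp] theorem sig_nil (s t : ℝ) : sig X [] s t = 1 := rfl

theorem sig_cons (a : Fin d) (w : List (Fin d)) (s t : ℝ) :
    sig X (a :: w) s t = ∫ u in s..t, deriv (fun r => X r a) u * sig X w u t := rfl

theorem sig_self_of_ne_nil {w : List (Fin d)} (hw : w ≠ []) (t : ℝ) : sig X w t t = 0 := by
  cases w with
  | nil => exact absurd rfl hw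
  | cons a w => simp [sig_cons]

theorem tsum_sig_self_mul (t : ℝ) (g : List (Fin d) → ℝ) :
    ∑' w, sig X w t t * g w = g [] := by
  rw [tsum_eq_single [] fun w hw => by rw [sig_self_of_ne_nil hw, zero_mul], sig_nil, one_mul]

theorem abs_sig_le {s t C : ℝ}
    (hC : ∀ a, ∀ u ∈ uIcc s t, |deriv (fun r => X r a) u| ≤ C) (w : List (Fin d)) :
    |sig X w s t| ≤ (C * |t - s|) ^ w.length / w.length.factorial := by
  induction w generalizing s with
  | nil => simp
  | cons a w ih =>
    set n := w.length
    have hC0 : 0 ≤ C := (abs_nonneg _).trans (hC a s left_mem_uIcc)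
    have hbound : ∀ u ∈ Ι s t, ‖deriv (fun r => X r a) u * sig X w u t‖
        ≤ C ^ (n + 1) / n.factorial * |u - t| ^ n := by
      intro u hu
      have hsub : uIcc u t ⊆ uIcc s t := uIcc_subset_uIcc_right (uIoc_subset_uIcc hu)
      calc ‖deriv (fun r => X r a) u * sig X w u t‖
          = |deriv (fun r => X r a) u| * |sig X w u t| := abs_mul _ _
        _ ≤ C * ((C * |t - u|) ^ n / n.factorial) :=
          mul_le_mul (hC a u (hsub left_mem_uIcc)) (ih fun b v hv => hC b v (hsub hv))
            (abs_nonneg _) hC0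
        _ = C ^ (n + 1) / n.factorial * |u - t| ^ n := by rw [abs_sub_comm]; ring
    calc |sig X (a :: w) s t|
        ≤ |∫ u in s..t, C ^ (n + 1) / n.factorial * |u - t| ^ n| :=
          norm_integral_le_abs_of_norm_le (ae_restrict_of_forall_mem measurableSet_uIoc hbound)
            (Continuous.intervalIntegrable (by fun_prop) _ _)
      _ = (C * |t - s|) ^ (n + 1) / (n + 1).factorial := by
        rw [abs_integral_eq_abs_integral_uIoc, MeasureTheory.integral_const_mul, uIoc_comm,
          integral_pow_abs_sub_uIoc, Nat.factorial_succ]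
        rw [abs_of_nonneg (by positivity), abs_sub_comm s t]
        push_cast
        field_simp
        ring

end Signature

section Derivatives

variable {d : ℕ} {X : ℝ → Fin d → ℝ} (hX : ∀ a, Continuous (deriv fun r => X r a))
include hX

theorem continuous_sig (w : List (Fin d)) : Continuous (Function.uncurry (sig X w)) := by
  induction w with
  | nil => exact continuous_const
  | cons a w ih =>
    have hint : Continuous (Function.uncurry
        fun (p : ℝ × ℝ) u => deriv (fun r => X r a) u * sig X w u p.2) :=
      ((hX a).comp continuous_snd).mul
        (ih.comp (continuous_snd.prodMk (continuous_snd.comp continuous_fst)))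
    have hprim := fun {b : ℝ × ℝ → ℝ} (hb : Continuous b) =>
      continuous_parametric_intervalIntegral_of_continuous (μ := volume) (a₀ := 0) hint hb
    refine ((hprim continuous_snd).sub (hprim continuous_fst)).congr fun p => ?_
    have hcont := (hX a).mul (ih.comp (Continuous.prodMk_left p.2))
    exact integral_interval_sub_left (hcont.intervalIntegrable _ _) (hcont.intervalIntegrable _ _)

theorem hasDerivAt_sig_append_singleton (w : List (Fin d)) (a : Fin d) (s t : ℝ) :
    HasDerivAt (fun y => sig X (w ++ [a]) s y) (deriv (fun r => X r a) t * sig X w s t) t := by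
  induction w generalizing s t with
  | nil =>
    simpa [sig_cons] using ((hX a).integral_hasStrictDerivAt s t).hasDerivAt
  | cons b w ih =>
    have key := hasDerivAt_integral_upper_param
      (f := fun u y => deriv (fun r => X r b) u * sig X (w ++ [a]) u y)
      (f' := fun u y => deriv (fun r => X r b) u * (deriv (fun r => X r a) y * sig X w u y))
      (((hX b).comp continuous_fst).mul (continuous_sig hX _))
      (((hX b).comp continuous_fst).mul (((hX a).comp continuous_snd).mul (continuous_sig hX _)))
      (fun u y => (ih u y).const_mul _) s t
    rw [sig_self_of_ne_nil (by simp), mul_zero, zero_add] at key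
    refine key.congr_deriv ?_
    rw [sig_cons, ← intervalIntegral.integral_const_mul]
    congr 1 with u
    ring

end Derivatives

section Kernel

variable {d : ℕ} {X Y : ℝ → Fin d → ℝ}

theorem exists_abs_deriv_le (hX : ∀ a, Continuous (deriv fun r => X r a)) {K : Set ℝ}
    (hK : IsCompact K) : ∃ C, 0 ≤ C ∧ ∀ a, ∀ u ∈ K, |deriv (fun r => X r a) u| ≤ C := by
  obtain ⟨C, hC⟩ := hK.exists_bound_of_continuousOn (continuous_pi hX).continuousOn
  exact ⟨max C 0, le_max_right _ _, fun a u hu =>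
    (norm_le_pi_norm (fun a => deriv (fun r => X r a) u) a).trans
      ((hC u hu).trans (le_max_left _ _))⟩

theorem abs_sig_zero_le {R C x : ℝ} (hC0 : 0 ≤ C)
    (hC : ∀ a, ∀ u ∈ Icc (-R) R, |deriv (fun r => X r a) u| ≤ C) (hx : x ∈ Icc (-R) R)
    (w : List (Fin d)) : |sig X w 0 x| ≤ (C * R) ^ w.length / w.length.factorial := by
  have h0 : (0 : ℝ) ∈ Icc (-R) R := ⟨by linarith [hx.1, hx.2], by linarith [hx.1, hx.2]⟩
  refine (abs_sig_le (fun a u hu => hC a u (uIcc_subset_Icc h0 hx hu)) w).trans ?_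
  gcongr
  rw [sub_zero]
  exact abs_le.2 hx

variable (hX : ∀ a, Continuous (deriv fun r => X r a))
  (hY : ∀ a, Continuous (deriv fun r => Y r a))
include hX hY

theorem summable_sig_mul_sig (s t s' t' : ℝ) :
    Summable fun w => sig X w s t * sig Y w s' t' := by
  obtain ⟨CX, hCX0, hCX⟩ := exists_abs_deriv_le hX (isCompact_uIcc (a := s) (b := t))
  obtain ⟨CY, hCY0, hCY⟩ := exists_abs_deriv_le hY (isCompact_uIcc (a := s') (b := t'))
  refine .of_norm_bounded ((summable_pow_length_div_factorial (c := CY * |t' - s'|)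
    (by positivity)).mul_left (Real.exp (CX * |t - s|))) fun w => ?_
  rw [norm_mul]
  exact mul_le_mul ((abs_sig_le hCX w).trans (Real.pow_div_factorial_le_exp _ (by positivity) _))
    (abs_sig_le hCY w) (abs_nonneg _) (Real.exp_pos _).le

theorem tsum_sig_mul_sig_eq_one_add (s t : ℝ) :
    ∑' w, sig X w 0 s * sig Y w 0 t
      = 1 + ∑' p : List (Fin d) × Fin d,
          sig X (p.1 ++ [p.2]) 0 s * sig Y (p.1 ++ [p.2]) 0 t := by
  rw [tsum_list_eq_nil_add_tsum_append_singleton (summable_sig_mul_sig hX hY 0 s 0 t), sig_nil,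
    sig_nil, one_mul]

theorem tsum_deriv_sig_mul_deriv_sig (s t : ℝ) :
    ∑' p : List (Fin d) × Fin d, deriv (fun r => X r p.2) s * sig X p.1 0 s
        * (deriv (fun r => Y r p.2) t * sig Y p.1 0 t)
      = (∑ a, deriv (fun r => X r a) s * deriv (fun r => Y r a) t)
        * ∑' w, sig X w 0 s * sig Y w 0 t := by
  have hnorm : Summable fun w => ‖sig X w 0 s * sig Y w 0 t‖ :=
    (summable_sig_mul_sig hX hY 0 s 0 t).abs
  have hprod := tsum_mul_tsum_of_summable_norm hnorm
    (Summable.of_finite (f := fun a => ‖deriv (fun r => X r a) s * deriv (fun r => Y r a) t‖))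
  rw [tsum_fintype (L := .unconditional _)
    (fun a => deriv (fun r => X r a) s * deriv (fun r => Y r a) t)] at hprod
  rw [mul_comm, hprod]
  exact tsum_congr fun p => by ring

end Kernel

section KernelDerivatives

variable {d : ℕ} {X Y : ℝ → Fin d → ℝ} {R C : ℝ} (hC0 : 0 ≤ C)

include hC0

theorem abs_sig_zero_le_exp (hC : ∀ a, ∀ u ∈ Icc (-R) R, |deriv (fun r => X r a) u| ≤ C)
    {x : ℝ} (hx : x ∈ Icc (-R) R) (w : List (Fin d)) : |sig X w 0 x| ≤ Real.exp (C * R) :=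
  (abs_sig_zero_le hC0 hC hx w).trans
    (Real.pow_div_factorial_le_exp _ (mul_nonneg hC0 (by linarith [hx.1, hx.2])) _)

theorem abs_deriv_mul_sig_zero_le (hC : ∀ a, ∀ u ∈ Icc (-R) R, |deriv (fun r => X r a) u| ≤ C)
    {x : ℝ} (hx : x ∈ Icc (-R) R) (a : Fin d) (w : List (Fin d)) :
    |deriv (fun r => X r a) x * sig X w 0 x|
      ≤ C * ((C * R) ^ w.length / w.length.factorial) := by
  rw [abs_mul]
  exact mul_le_mul (hC a x hx) (abs_sig_zero_le hC0 hC hx w) (abs_nonneg _) hC0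

variable (hCX : ∀ a, ∀ u ∈ Icc (-R) R, |deriv (fun r => X r a) u| ≤ C)
  (hCY : ∀ a, ∀ u ∈ Icc (-R) R, |deriv (fun r => Y r a) u| ≤ C)
include hCX hCY

theorem hasDerivAt_tsum_sig_append_singleton_right (hY : ∀ a, Continuous (deriv fun r => Y r a))
    {s t : ℝ} (hs : s ∈ Icc (-R) R) (ht : t ∈ Ioo (-R) R) :
    HasDerivAt (fun y => ∑' p : List (Fin d) × Fin d,
        sig X (p.1 ++ [p.2]) 0 s * sig Y (p.1 ++ [p.2]) 0 y)
      (∑' p : List (Fin d) × Fin d,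
        sig X (p.1 ++ [p.2]) 0 s * (deriv (fun r => Y r p.2) t * sig Y p.1 0 t)) t := by
  have h0 : (0 : ℝ) ∈ Ioo (-R) R := ⟨by linarith [ht.1, ht.2], by linarith [ht.1, ht.2]⟩
  refine hasDerivAt_tsum_of_isPreconnected
    ((summable_pow_length_fst_div_factorial (mul_nonneg hC0 h0.2.le)).mul_left
      (Real.exp (C * R) * C))
    isOpen_Ioo isPreconnected_Ioo
    (fun p y _ => (hasDerivAt_sig_append_singleton hY p.1 p.2 0 y).const_mul _)
    (fun p y hy => ?_) h0 ?_ ht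
  · rw [norm_mul, mul_assoc]
    exact mul_le_mul (abs_sig_zero_le_exp hC0 hCX hs _)
      (abs_deriv_mul_sig_zero_le hC0 hCY (Ioo_subset_Icc_self hy) p.2 p.1) (abs_nonneg _)
      (Real.exp_pos _).le
  · simp only [sig_self_of_ne_nil (List.concat_ne_nil _ _), mul_zero]
    exact summable_zero

theorem hasDerivAt_tsum_sig_append_singleton_left (hX : ∀ a, Continuous (deriv fun r => X r a))
    {s t : ℝ} (hs : s ∈ Ioo (-R) R) (ht : t ∈ Icc (-R) R) :
    HasDerivAt (fun x => ∑' p : List (Fin d) × Fin d,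
        sig X (p.1 ++ [p.2]) 0 x * (deriv (fun r => Y r p.2) t * sig Y p.1 0 t))
      (∑' p : List (Fin d) × Fin d, deriv (fun r => X r p.2) s * sig X p.1 0 s
        * (deriv (fun r => Y r p.2) t * sig Y p.1 0 t)) s := by
  have h0 : (0 : ℝ) ∈ Ioo (-R) R := ⟨by linarith [hs.1, hs.2], by linarith [hs.1, hs.2]⟩
  refine hasDerivAt_tsum_of_isPreconnected
    ((summable_pow_length_fst_div_factorial (mul_nonneg hC0 h0.2.le)).mul_left
      (C * Real.exp (C * R) * C))
    isOpen_Ioo isPreconnected_Ioo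
    (fun p x _ => (hasDerivAt_sig_append_singleton hX p.1 p.2 0 x).mul_const _)
    (fun p x hx => ?_) h0 ?_ hs
  · rw [norm_mul, mul_assoc]
    refine mul_le_mul ?_ (abs_deriv_mul_sig_zero_le hC0 hCY ht p.2 p.1) (abs_nonneg _)
      (by positivity)
    rw [norm_mul]
    exact mul_le_mul (hCX p.2 x (Ioo_subset_Icc_self hx))
      (abs_sig_zero_le_exp hC0 hCX (Ioo_subset_Icc_self hx) _) (abs_nonneg _) hC0
  · simp only [sig_self_of_ne_nil (List.concat_ne_nil _ _), zero_mul]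
    exact summable_zero

end KernelDerivatives

theorem deriv_deriv_tsum_sig_mul_sig {d : ℕ} {X Y : ℝ → Fin d → ℝ}
    (hX : ∀ a, Continuous (deriv fun r => X r a)) (hY : ∀ a, Continuous (deriv fun r => Y r a))
    (s t : ℝ) :
    deriv (fun s' => deriv (fun t' => ∑' w : List (Fin d), sig X w 0 s' * sig Y w 0 t') t) s
      = (∑ a : Fin d, deriv (fun r => X r a) s * deriv (fun r => Y r a) t)
        * ∑' w : List (Fin d), sig X w 0 s * sig Y w 0 t := by
  set R := |s| + |t| + 1
  have hs : s ∈ Ioo (-R) R := abs_lt.1 (by linarith [abs_nonneg t])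
  have ht : t ∈ Ioo (-R) R := abs_lt.1 (by linarith [abs_nonneg s])
  obtain ⟨CX, hCX0, hCX⟩ := exists_abs_deriv_le hX (isCompact_Icc (a := -R) (b := R))
  obtain ⟨CY, -, hCY⟩ := exists_abs_deriv_le hY (isCompact_Icc (a := -R) (b := R))
  have hC0 : 0 ≤ max CX CY := hCX0.trans (le_max_left _ _)
  have hCX' := fun a u hu => (hCX a u hu).trans (le_max_left CX CY)
  have hCY' := fun a u hu => (hCY a u hu).trans (le_max_right CX CY)
  have hinner : (fun s' => deriv (fun t' => ∑' w, sig X w 0 s' * sig Y w 0 t') t)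
      =ᶠ[𝓝 s] fun s' => ∑' p : List (Fin d) × Fin d,
        sig X (p.1 ++ [p.2]) 0 s' * (deriv (fun r => Y r p.2) t * sig Y p.1 0 t) := by
    filter_upwards [isOpen_Ioo.mem_nhds hs] with s' hs'
    simp_rw [tsum_sig_mul_sig_eq_one_add hX hY s']
    rw [deriv_const_add, (hasDerivAt_tsum_sig_append_singleton_right hC0 hCX' hCY' hY
      (Ioo_subset_Icc_self hs') ht).deriv]
  rw [hinner.deriv_eq, (hasDerivAt_tsum_sig_append_singleton_left hC0 hCX' hCY' hX hs
    (Ioo_subset_Icc_self ht)).deriv, tsum_deriv_sig_mul_deriv_sig hX hY]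

theorem signature_kernel_PDE_general {d : ℕ} (T : ℝ)
    (X Y : ℝ → Fin d → ℝ)
    (hX : ∀ a : Fin d, ContDiff ℝ 1 (fun t => X t a))
    (hY : ∀ a : Fin d, ContDiff ℝ 1 (fun t => Y t a)) :
    (∀ s ∈ Set.Icc (0:ℝ) T, ∀ t ∈ Set.Icc (0:ℝ) T,
      deriv (fun s' => deriv
          (fun t' => ∑' w : List (Fin d), sig X w 0 s' * sig Y w 0 t') t) s
        = (∑ a : Fin d, deriv (fun r => X r a) s * deriv (fun r => Y r a) t)
            * ∑' w : List (Fin d), sig X w 0 s * sig Y w 0 t)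
    ∧ (∀ t : ℝ, (∑' w : List (Fin d), sig X w 0 0 * sig Y w 0 t) = 1)
    ∧ (∀ s : ℝ, (∑' w : List (Fin d), sig X w 0 s * sig Y w 0 0) = 1) := by
  refine ⟨fun s _ t _ => deriv_deriv_tsum_sig_mul_sig (fun a => (hX a).continuous_deriv le_rfl)
    (fun a => (hY a).continuous_deriv le_rfl) s t, fun t => ?_, fun s => ?_⟩
  · exact (tsum_sig_self_mul 0 _).trans (sig_nil 0 t)
  · simp_rw [mul_comm (sig X _ 0 s)]
    exact (tsum_sig_self_mul 0 _).trans (sig_nil 0 s)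

/-- The signature kernel `U(s,t) = k(X|_{[0,s]}, Y|_{[0,t]}) = Σ_w S(X|_{[0,s]})^w S(Y|_{[0,t]})^w`
satisfies the hyperbolic PDE `∂²U/∂s∂t = (Ẋ_s · Ẏ_t) U` with boundary conditions
`U(0,·) = 1` and `U(·,0) = 1`. -/
theorem signature_kernel_PDE {d : ℕ} (T : ℝ) (hT : 0 < T)
    (X Y : ℝ → Fin d → ℝ)
    (hX : ∀ a : Fin d, ContDiff ℝ 1 (fun t => X t a))
    (hY : ∀ a : Fin d, ContDiff ℝ 1 (fun t => Y t a)) :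
    (∀ s ∈ Set.Icc (0:ℝ) T, ∀ t ∈ Set.Icc (0:ℝ) T,
      deriv (fun s' => deriv
          (fun t' => ∑' w : List (Fin d), sig X w 0 s' * sig Y w 0 t') t) s
        = (∑ a : Fin d, deriv (fun r => X r a) s * deriv (fun r => Y r a) t)
            * ∑' w : List (Fin d), sig X w 0 s * sig Y w 0 t)
    ∧ (∀ t : ℝ, (∑' w : List (Fin d), sig X w 0 0 * sig Y w 0 t) = 1)
    ∧ (∀ s : ℝ, (∑' w : List (Fin d), sig X w 0 s * sig Y w 0 0) = 1) :=
  signature_kernel_PDE_general T X Y hX hY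
end

section
/- Chen's identity: for continuous bounded-variation paths X on [0,s] and Y on [s,T] with X_s = Y_s, the signature of the concatenated path Z (equal to X on [0,s] and Y on [s,T]) satisfies, for each multi-index (α_1,...,α_j): S(Z)^{(α_1,...,α_j)} = Σ_{i=0}^{j} S(X)^{(α_1,...,α_i)} · S(Y)^{(α_{i+1},...,α_j)}. -/
open MeasureTheory intervalIntegral

lemma sig_cont {d : ℕ} (Z : ℝ → Fin d → ℝ) (hZ : ∀ a : Fin d, ContDiff ℝ 1 (fun t => Z t a)) :
    ∀ (w : List (Fin d)) (t : ℝ), Continuous (fun u => sig Z w u t)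
  | [], t => by simpa [sig] using continuous_const
  | a :: w, t => by
    have hf : Continuous (fun u => deriv (fun r => Z r a) u * sig Z w u t) :=
      ((hZ a).continuous_deriv le_rfl).mul (sig_cont Z hZ w t)
    have h : Continuous (fun u => ∫ v in t..u, deriv (fun r => Z r a) v * sig Z w v t) :=
      intervalIntegral.continuous_primitive (fun x y => hf.intervalIntegrable x y) t
    have := h.neg
    simp only [sig]
    convert this using 2 with u
    exact intervalIntegral.integral_symm t u

lemma chen_aux {d : ℕ} (Z : ℝ → Fin d → ℝ) (hZ : ∀ a : Fin d, ContDiff ℝ 1 (fun t => Z t a)) :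
    ∀ (w : List (Fin d)) (a b s : ℝ),
      sig Z w a b = ∑ i ∈ Finset.range (w.length + 1),
        sig Z (w.take i) a s * sig Z (w.drop i) s b
  | [], a, b, s => by simp [sig]
  | c :: w, a, b, s => by
    have hf : Continuous (deriv fun r => Z r c) := (hZ c).continuous_deriv le_rfl
    have hcont : ∀ t : ℝ, Continuous fun u => deriv (fun r => Z r c) u * sig Z w u t :=
      fun t => hf.mul (sig_cont Z hZ w t)
    have hsplit : sig Z (c :: w) a b =
        (∫ u in a..s, deriv (fun r => Z r c) u * sig Z w u b) + sig Z (c :: w) s b := by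
      show (∫ u in a..b, deriv (fun r => Z r c) u * sig Z w u b) = _
      rw [← intervalIntegral.integral_add_adjacent_intervals
        ((hcont b).intervalIntegrable a s) ((hcont b).intervalIntegrable s b)]
      rfl
    rw [hsplit]
    have h1 : (∫ u in a..s, deriv (fun r => Z r c) u * sig Z w u b)
        = ∑ i ∈ Finset.range (w.length + 1),
            sig Z (c :: w.take i) a s * sig Z (w.drop i) s b := by
      have heq : ∀ u, deriv (fun r => Z r c) u * sig Z w u b
          = ∑ i ∈ Finset.range (w.length + 1),
              (deriv (fun r => Z r c) u * sig Z (w.take i) u s) * sig Z (w.drop i) s b := by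
        intro u
        rw [chen_aux Z hZ w u b s, Finset.mul_sum]
        simp [mul_assoc]
      simp_rw [heq]
      rw [intervalIntegral.integral_finset_sum]
      · refine Finset.sum_congr rfl fun i _ => ?_
        rw [intervalIntegral.integral_mul_const]
        rfl
      · intro i _
        exact ((hf.mul (sig_cont Z hZ (w.take i) s)).mul continuous_const).intervalIntegrable a s
    rw [h1]
    conv_rhs => rw [Finset.sum_range_succ']
    simp [sig]

/-- Chen's identity: for a path `Z` (equal to `X` on `[0,s]` and `Y` on `[s,T]`),
`S(Z)^{(α₁,…,α_j)}_{[0,T]} = Σ_{i=0}^{j} S(X)^{(α₁,…,α_i)}_{[0,s]} · S(Y)^{(α_{i+1},…,α_j)}_{[s,T]}`. -/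
theorem chen_identity {d : ℕ} (T s : ℝ) (hs : 0 ≤ s) (hsT : s ≤ T)
    (Z : ℝ → Fin d → ℝ) (hZ : ∀ a : Fin d, ContDiff ℝ 1 (fun t => Z t a))
    (w : List (Fin d)) :
    sig Z w 0 T
      = ∑ i ∈ Finset.range (w.length + 1), sig Z (w.take i) 0 s * sig Z (w.drop i) s T := by
  exact chen_aux Z hZ w 0 T s
end

section
/- Existence of the Goursat solution by Picard iteration: for bounded continuous C : [0,T]² → R, the sequence U_0 ≡ 1, U_{n+1}(s,t) = 1 + ∫_0^s∫_0^t C(u,v) U_n(u,v) du dv converges uniformly on [0,T]² to a continuous solution U of U(s,t) = 1 + ∫_0^s∫_0^t C(u,v)U(u,v)dudv, and the iterates satisfy |U_{n+1}(s,t) − U_n(s,t)| ≤ (K s t)^{n+1}/((n+1)!)², where K bounds |C|. -/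
/-!
Write `Φ f (s,t) = 1 + ∫₀ˢ∫₀ᵗ C f` for the Goursat map. Since `Φ f - Φ g = ∫∫ C (f - g)`, a
bound `|f - g| ≤ (K u v)^m / (m!)²` on `[0,s] × [0,t]` integrates, one power of `u` and one of `v`
at a time, to `|Φ f - Φ g| ≤ (K s t)^(m+1) / ((m+1)!)²`. Starting from `Φ 0 = 1 = U₀` this bounds
the increments of the Picard iterates, and these bounds are summable uniformly on `[0,T]²`. The
uniform limit is continuous, and it is a fixed point of `Φ` because `Φ` is `K s t`-Lipschitz for
the sup norm on `[0,s] × [0,t]`. To have integrable integrands throughout, `C` is first extended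
continuously from `[0,T]²` to the plane by clamping both arguments.
-/

open intervalIntegral Set Filter Topology Function

theorem tendstoUniformlyOn_of_summable_norm_sub_le {α E : Type*} [NormedAddCommGroup E]
    [CompleteSpace E] {F : ℕ → α → E} {M : ℕ → ℝ} {S : Set α} (hM : Summable M)
    (hFM : ∀ n, ∀ x ∈ S, ‖F (n + 1) x - F n x‖ ≤ M n) :
    TendstoUniformlyOn F (fun x => F 0 x + ∑' n, (F (n + 1) x - F n x)) atTop S := by
  have h := tendstoUniformlyOn_tsum_nat hM fun n x hx => hFM n x hx
  rw [Metric.tendstoUniformlyOn_iff] at h ⊢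
  intro ε hε
  filter_upwards [h ε hε] with n hn x hx
  rw [← sub_add_cancel (F n x) (F 0 x), ← Finset.sum_range_sub (F · x), add_comm _ (F 0 x),
    dist_add_left]
  exact hn x hx

theorem summable_pow_div_factorial_sq {x : ℝ} (hx : 0 ≤ x) :
    Summable fun n : ℕ => x ^ n / (n.factorial : ℝ) ^ 2 := by
  refine (Real.summable_pow_div_factorial x).of_nonneg_of_le (fun n => by positivity) fun n => ?_
  have hfac : (1 : ℝ) ≤ n.factorial := by exact_mod_cast n.factorial_pos
  exact div_le_div_of_nonneg_left (by positivity) (by positivity) (by nlinarith)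

section squareExtend

variable {a b : ℝ} {F : ℝ → ℝ → ℝ}

noncomputable def squareExtend (h : a ≤ b) (F : ℝ → ℝ → ℝ) (u v : ℝ) : ℝ :=
  F (projIcc a b h u) (projIcc a b h v)

theorem squareExtend_of_mem (h : a ≤ b) {u v : ℝ} (hu : u ∈ Icc a b) (hv : v ∈ Icc a b) :
    squareExtend h F u v = F u v := by
  simp [squareExtend, projIcc_of_mem h hu, projIcc_of_mem h hv]

theorem continuous_squareExtend (h : a ≤ b) (hF : ContinuousOn (uncurry F) (Icc a b ×ˢ Icc a b)) :
    Continuous (uncurry (squareExtend h F)) :=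
  hF.comp_continuous (f := fun p : ℝ × ℝ => ((projIcc a b h p.1 : ℝ), (projIcc a b h p.2 : ℝ)))
    (by fun_prop) fun p => ⟨(projIcc a b h p.1).2, (projIcc a b h p.2).2⟩

end squareExtend

noncomputable def doubleIntegral (F : ℝ → ℝ → ℝ) (s t : ℝ) : ℝ :=
  ∫ u in (0:ℝ)..s, ∫ v in (0:ℝ)..t, F u v

section doubleIntegral

variable {F G : ℝ → ℝ → ℝ} {s t : ℝ}

theorem continuous_doubleIntegral (hF : Continuous (uncurry F)) :
    Continuous (uncurry (doubleIntegral F)) := by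
  have hinner : Continuous fun q : ℝ × ℝ => ∫ v in (0:ℝ)..q.2, F q.1 v :=
    continuous_parametric_intervalIntegral_of_continuous (f := fun (q : ℝ × ℝ) v => F q.1 v)
      (hF.comp ((continuous_fst.comp continuous_fst).prodMk continuous_snd)) continuous_snd
  exact continuous_parametric_intervalIntegral_of_continuous
    (f := fun (p : ℝ × ℝ) u => ∫ v in (0:ℝ)..p.2, F u v)
    (hinner.comp (continuous_snd.prodMk (continuous_snd.comp continuous_fst))) continuous_fst

theorem doubleIntegral_sub (hF : Continuous (uncurry F)) (hG : Continuous (uncurry G)) :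
    doubleIntegral (fun u v => F u v - G u v) s t
      = doubleIntegral F s t - doubleIntegral G s t := by
  have hinner {H : ℝ → ℝ → ℝ} (hH : Continuous (uncurry H)) :
      Continuous fun u => ∫ v in (0:ℝ)..t, H u v :=
    continuous_parametric_intervalIntegral_of_continuous' hH 0 t
  rw [doubleIntegral, doubleIntegral, doubleIntegral,
    ← integral_sub ((hinner hF).intervalIntegrable 0 s) ((hinner hG).intervalIntegrable 0 s)]
  refine integral_congr fun u _ => integral_sub ?_ ?_
  · exact (hF.comp (Continuous.prodMk_right u)).intervalIntegrable 0 t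
  · exact (hG.comp (Continuous.prodMk_right u)).intervalIntegrable 0 t

theorem doubleIntegral_congr (hs : 0 ≤ s) (ht : 0 ≤ t)
    (h : ∀ u ∈ Icc 0 s, ∀ v ∈ Icc 0 t, F u v = G u v) :
    doubleIntegral F s t = doubleIntegral G s t := by
  refine integral_congr fun u hu => integral_congr fun v hv => ?_
  rw [uIcc_of_le hs] at hu
  rw [uIcc_of_le ht] at hv
  exact h u hu v hv

theorem abs_doubleIntegral_le (hF : Continuous (uncurry F)) (hG : Continuous (uncurry G))
    (hs : 0 ≤ s) (ht : 0 ≤ t) (h : ∀ u ∈ Icc 0 s, ∀ v ∈ Icc 0 t, |F u v| ≤ G u v) :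
    |doubleIntegral F s t| ≤ doubleIntegral G s t := by
  refine (abs_integral_le_integral_abs hs).trans (integral_mono_on hs ?_ ?_ fun u hu => ?_)
  · exact (continuous_parametric_intervalIntegral_of_continuous' hF 0 t).abs.intervalIntegrable 0 s
  · exact (continuous_parametric_intervalIntegral_of_continuous' hG 0 t).intervalIntegrable 0 s
  refine (abs_integral_le_integral_abs ht).trans (integral_mono_on ht ?_ ?_ (h u hu))
  · exact (hF.comp (Continuous.prodMk_right u)).abs.intervalIntegrable 0 t
  · exact (hG.comp (Continuous.prodMk_right u)).intervalIntegrable 0 t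

theorem doubleIntegral_const_mul_pow_mul_pow (c : ℝ) (m : ℕ) (s t : ℝ) :
    doubleIntegral (fun u v => c * u ^ m * v ^ m) s t
      = c * s ^ (m + 1) * t ^ (m + 1) / ((m : ℝ) + 1) ^ 2 := by
  simp only [doubleIntegral, integral_const_mul, integral_mul_const, integral_pow]
  field_simp
  ring

end doubleIntegral

noncomputable def goursatMap (C f : ℝ → ℝ → ℝ) (s t : ℝ) : ℝ :=
  1 + doubleIntegral (fun u v => C u v * f u v) s t

noncomputable def picardIter (C : ℝ → ℝ → ℝ) : ℕ → ℝ → ℝ → ℝ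
  | 0 => 1
  | n + 1 => goursatMap C (picardIter C n)

section picard

variable {C : ℝ → ℝ → ℝ} {K T : ℝ}

theorem goursatMap_zero (C : ℝ → ℝ → ℝ) : goursatMap C 0 = 1 := by
  ext s t
  simp [goursatMap, doubleIntegral]

theorem picardIter_eq_of_eqOn {C' : ℝ → ℝ → ℝ} {U : ℕ → ℝ → ℝ → ℝ} (hU0 : ∀ s t, U 0 s t = 1)
    (hUrec : ∀ n s t, U (n + 1) s t = goursatMap C (U n) s t)
    (hCC' : ∀ u ∈ Icc 0 T, ∀ v ∈ Icc 0 T, C u v = C' u v) (n : ℕ) :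
    ∀ s ∈ Icc 0 T, ∀ t ∈ Icc 0 T, U n s t = picardIter C' n s t := by
  induction n with
  | zero => exact fun s _ t _ => hU0 s t
  | succ n ih =>
    intro s hs t ht
    have hsub {x y : ℝ} (hx : x ∈ Icc 0 y) (hy : y ∈ Icc 0 T) : x ∈ Icc 0 T :=
      Icc_subset_Icc_right hy.2 hx
    rw [hUrec, picardIter]
    refine congrArg (1 + ·) (doubleIntegral_congr hs.1 ht.1 fun u hu v hv => ?_)
    rw [hCC' u (hsub hu hs) v (hsub hv ht), ih u (hsub hu hs) v (hsub hv ht)]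

variable (hC : Continuous (uncurry C)) (hCK : ∀ u v, |C u v| ≤ K)
include hC

theorem continuous_goursatMap {f : ℝ → ℝ → ℝ} (hf : Continuous (uncurry f)) :
    Continuous (uncurry (goursatMap C f)) :=
  continuous_const.add (continuous_doubleIntegral (hC.mul hf))

theorem continuous_picardIter (n : ℕ) : Continuous (uncurry (picardIter C n)) := by
  induction n with
  | zero => exact continuous_const
  | succ n ih => exact continuous_goursatMap hC ih

include hCK

theorem abs_goursatMap_sub_le {f g B : ℝ → ℝ → ℝ} (hf : Continuous (uncurry f))
    (hg : Continuous (uncurry g)) (hB : Continuous (uncurry B)) {s t : ℝ} (hs : 0 ≤ s)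
    (ht : 0 ≤ t) (hfg : ∀ u ∈ Icc 0 s, ∀ v ∈ Icc 0 t, |f u v - g u v| ≤ B u v) :
    |goursatMap C f s t - goursatMap C g s t| ≤ doubleIntegral (fun u v => K * B u v) s t := by
  have hK : 0 ≤ K := (abs_nonneg _).trans (hCK 0 0)
  have hCf : Continuous (uncurry fun u v => C u v * f u v) := hC.mul hf
  have hCg : Continuous (uncurry fun u v => C u v * g u v) := hC.mul hg
  rw [goursatMap, goursatMap, add_sub_add_left_eq_sub, ← doubleIntegral_sub hCf hCg]
  refine abs_doubleIntegral_le (hCf.sub hCg) (continuous_const.mul hB) hs ht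
    fun u hu v hv => ?_
  rw [← mul_sub, abs_mul]
  exact mul_le_mul (hCK u v) (hfg u hu v hv) (abs_nonneg _) hK

theorem abs_goursatMap_sub_le_pow {f g : ℝ → ℝ → ℝ} (hf : Continuous (uncurry f))
    (hg : Continuous (uncurry g)) {m : ℕ}
    (hfg : ∀ u v, 0 ≤ u → 0 ≤ v → |f u v - g u v| ≤ (K * u * v) ^ m / (m.factorial : ℝ) ^ 2)
    {s t : ℝ} (hs : 0 ≤ s) (ht : 0 ≤ t) :
    |goursatMap C f s t - goursatMap C g s t|
      ≤ (K * s * t) ^ (m + 1) / ((m + 1).factorial : ℝ) ^ 2 := by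
  have hB : ∀ u ∈ Icc 0 s, ∀ v ∈ Icc 0 t,
      |f u v - g u v| ≤ K ^ m / (m.factorial : ℝ) ^ 2 * u ^ m * v ^ m := by
    intro u hu v hv
    convert hfg u v hu.1 hv.1 using 1
    ring
  refine (abs_goursatMap_sub_le hC hCK hf hg (by fun_prop) hs ht hB).trans (le_of_eq ?_)
  simp only [← mul_assoc, doubleIntegral_const_mul_pow_mul_pow, Nat.factorial_succ]
  push_cast
  field_simp
  ring

theorem abs_picardIter_succ_sub_le (n : ℕ) {s t : ℝ} (hs : 0 ≤ s) (ht : 0 ≤ t) :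
    |picardIter C (n + 1) s t - picardIter C n s t|
      ≤ (K * s * t) ^ (n + 1) / ((n + 1).factorial : ℝ) ^ 2 := by
  induction n generalizing s t with
  | zero =>
    have h := abs_goursatMap_sub_le_pow hC hCK (f := 1) (g := 0) continuous_const
      continuous_const (m := 0) (fun u v _ _ => by simp) hs ht
    rwa [goursatMap_zero] at h
  | succ n ih =>
    exact abs_goursatMap_sub_le_pow hC hCK (continuous_picardIter hC (n + 1))
      (continuous_picardIter hC n) (fun u v hu hv => ih hu hv) hs ht

theorem exists_tendstoUniformlyOn_picardIter (hT : 0 ≤ T) :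
    ∃ L : ℝ × ℝ → ℝ, TendstoUniformlyOn (fun n (p : ℝ × ℝ) => picardIter C n p.1 p.2) L atTop
      (Icc 0 T ×ˢ Icc 0 T) := by
  have hK : 0 ≤ K := (abs_nonneg _).trans (hCK 0 0)
  have hM := (summable_nat_add_iff 1).2
    (summable_pow_div_factorial_sq (x := K * T * T) (by positivity))
  refine ⟨_, tendstoUniformlyOn_of_summable_norm_sub_le hM fun n p hp => ?_⟩
  obtain ⟨⟨hs0, hsT⟩, ⟨ht0, htT⟩⟩ := hp
  rw [Real.norm_eq_abs]
  refine (abs_picardIter_succ_sub_le hC hCK n hs0 ht0).trans ?_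
  gcongr

theorem eq_goursatMap_of_tendstoUniformlyOn {L : ℝ → ℝ → ℝ} (hL : Continuous (uncurry L))
    (hpL : TendstoUniformlyOn (fun n (p : ℝ × ℝ) => picardIter C n p.1 p.2) (uncurry L) atTop
      (Icc 0 T ×ˢ Icc 0 T))
    {s t : ℝ} (hs : s ∈ Icc 0 T) (ht : t ∈ Icc 0 T) : L s t = goursatMap C L s t := by
  have hK : 0 ≤ K := (abs_nonneg _).trans (hCK 0 0)
  have h_iter : Tendsto (fun n => picardIter C (n + 1) s t) atTop (𝓝 (L s t)) :=
    (hpL.tendsto_at (mk_mem_prod hs ht)).comp (tendsto_add_atTop_nat 1)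
  refine tendsto_nhds_unique h_iter (Metric.tendsto_nhds.2 fun ε hε => ?_)
  have hKst : 0 ≤ K * s * t := mul_nonneg (mul_nonneg hK hs.1) ht.1
  set δ := ε / (K * s * t + 1)
  filter_upwards [Metric.tendstoUniformlyOn_iff.1 hpL δ (by positivity)] with n hn
  have hclose : ∀ u ∈ Icc 0 s, ∀ v ∈ Icc 0 t, |picardIter C n u v - L u v| ≤ δ := by
    intro u hu v hv
    rw [abs_sub_comm, ← Real.dist_eq]
    exact (hn (u, v) ⟨Icc_subset_Icc_right hs.2 hu, Icc_subset_Icc_right ht.2 hv⟩).le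
  rw [Real.dist_eq]
  calc |picardIter C (n + 1) s t - goursatMap C L s t|
      ≤ doubleIntegral (fun _ _ => K * δ) s t :=
        abs_goursatMap_sub_le hC hCK (continuous_picardIter hC n) hL continuous_const
          hs.1 ht.1 hclose
    _ = K * s * t * δ := by
        simp only [doubleIntegral, intervalIntegral.integral_const, sub_zero, smul_eq_mul]
        ring
    _ < ε := by
        rw [mul_div_assoc', div_lt_iff₀ (by positivity)]
        nlinarith

theorem exists_continuous_picardIter_limit (hT : 0 ≤ T) :
    ∃ L : ℝ → ℝ → ℝ, Continuous (uncurry L) ∧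
      TendstoUniformlyOn (fun n (p : ℝ × ℝ) => picardIter C n p.1 p.2) (uncurry L) atTop
        (Icc 0 T ×ˢ Icc 0 T) ∧
      ∀ s ∈ Icc 0 T, ∀ t ∈ Icc 0 T, L s t = goursatMap C L s t := by
  obtain ⟨L₀, hpL₀⟩ := exists_tendstoUniformlyOn_picardIter hC hCK hT
  have hL₀ : ContinuousOn (uncurry (curry L₀)) (Icc 0 T ×ˢ Icc 0 T) := by
    rw [uncurry_curry]
    exact hpL₀.continuousOn
      (Frequently.of_forall fun n => (continuous_picardIter hC n).continuousOn)
  have hL := continuous_squareExtend hT hL₀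
  have hpL : TendstoUniformlyOn (fun n (p : ℝ × ℝ) => picardIter C n p.1 p.2)
      (uncurry (squareExtend hT (curry L₀))) atTop (Icc 0 T ×ˢ Icc 0 T) :=
    hpL₀.congr_right fun p hp => (squareExtend_of_mem (F := curry L₀) hT hp.1 hp.2).symm
  exact ⟨_, hL, hpL, fun s hs t ht => eq_goursatMap_of_tendstoUniformlyOn hC hCK hL hpL hs ht⟩

end picard

theorem goursat_picard_existence_general (T K : ℝ) (hT : 0 ≤ T) (C : ℝ → ℝ → ℝ)
    (hC : ContinuousOn (Function.uncurry C) (Icc 0 T ×ˢ Icc 0 T))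
    (hCK : ∀ s ∈ Icc (0:ℝ) T, ∀ t ∈ Icc (0:ℝ) T, |C s t| ≤ K)
    (U : ℕ → ℝ → ℝ → ℝ)
    (hU0 : ∀ s t : ℝ, U 0 s t = 1)
    (hUrec : ∀ n : ℕ, ∀ s t : ℝ,
      U (n + 1) s t = 1 + ∫ u in (0:ℝ)..s, ∫ v in (0:ℝ)..t, C u v * U n u v) :
    (∃ L : ℝ → ℝ → ℝ,
      ContinuousOn (Function.uncurry L) (Icc 0 T ×ˢ Icc 0 T)
      ∧ TendstoUniformlyOn (fun n (p : ℝ × ℝ) => U n p.1 p.2)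
          (fun p => L p.1 p.2) Filter.atTop (Icc 0 T ×ˢ Icc 0 T)
      ∧ (∀ s ∈ Icc (0:ℝ) T, ∀ t ∈ Icc (0:ℝ) T,
          L s t = 1 + ∫ u in (0:ℝ)..s, ∫ v in (0:ℝ)..t, C u v * L u v))
    ∧ (∀ n : ℕ, ∀ s ∈ Icc (0:ℝ) T, ∀ t ∈ Icc (0:ℝ) T,
        |U (n + 1) s t - U n s t| ≤ (K * s * t) ^ (n + 1) / ((Nat.factorial (n + 1) : ℝ)) ^ 2) := by
  set C' := squareExtend hT C
  have hC' : Continuous (uncurry C') := continuous_squareExtend hT hC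
  have hC'K : ∀ u v, |C' u v| ≤ K := fun u v => hCK _ (projIcc 0 T hT u).2 _ (projIcc 0 T hT v).2
  have hCC' : ∀ u ∈ Icc 0 T, ∀ v ∈ Icc 0 T, C u v = C' u v :=
    fun u hu v hv => (squareExtend_of_mem hT hu hv).symm
  have hU := picardIter_eq_of_eqOn hU0 hUrec hCC'
  obtain ⟨L, hL, hpL, hLeq⟩ := exists_continuous_picardIter_limit hC' hC'K hT
  refine ⟨⟨L, hL.continuousOn, hpL.congr (Eventually.of_forall fun n p hp => ?_),
    fun s hs t ht => ?_⟩, fun n s hs t ht => ?_⟩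
  · exact (hU n _ hp.1 _ hp.2).symm
  · rw [hLeq s hs t ht]
    refine congrArg (1 + ·) (doubleIntegral_congr hs.1 ht.1 fun u hu v hv => ?_)
    rw [hCC' u (Icc_subset_Icc_right hs.2 hu) v (Icc_subset_Icc_right ht.2 hv)]
  · rw [hU (n + 1) s hs t ht, hU n s hs t ht]
    exact abs_picardIter_succ_sub_le hC' hC'K n hs.1 ht.1

/-- Existence of the Goursat solution by Picard iteration: the iterates `U₀ ≡ 1`,
`U_{n+1}(s,t) = 1 + ∫₀ˢ∫₀ᵗ C(u,v) Uₙ(u,v) dv du` converge uniformly on `[0,T]²` to a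
continuous solution of the integral equation, and the increments satisfy
`|U_{n+1}(s,t) − Uₙ(s,t)| ≤ (K s t)^{n+1} / ((n+1)!)²` where `K` bounds `|C|`. -/
theorem goursat_picard_existence (T K : ℝ) (hT : 0 ≤ T) (hK : 0 ≤ K) (C : ℝ → ℝ → ℝ)
    (hC : ContinuousOn (Function.uncurry C) (Icc 0 T ×ˢ Icc 0 T))
    (hCK : ∀ s ∈ Icc (0:ℝ) T, ∀ t ∈ Icc (0:ℝ) T, |C s t| ≤ K)
    (U : ℕ → ℝ → ℝ → ℝ)
    (hU0 : ∀ s t : ℝ, U 0 s t = 1)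
    (hUrec : ∀ n : ℕ, ∀ s t : ℝ,
      U (n + 1) s t = 1 + ∫ u in (0:ℝ)..s, ∫ v in (0:ℝ)..t, C u v * U n u v) :
    (∃ L : ℝ → ℝ → ℝ,
      ContinuousOn (Function.uncurry L) (Icc 0 T ×ˢ Icc 0 T)
      ∧ TendstoUniformlyOn (fun n (p : ℝ × ℝ) => U n p.1 p.2)
          (fun p => L p.1 p.2) Filter.atTop (Icc 0 T ×ˢ Icc 0 T)
      ∧ (∀ s ∈ Icc (0:ℝ) T, ∀ t ∈ Icc (0:ℝ) T,
          L s t = 1 + ∫ u in (0:ℝ)..s, ∫ v in (0:ℝ)..t, C u v * L u v))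
    ∧ (∀ n : ℕ, ∀ s ∈ Icc (0:ℝ) T, ∀ t ∈ Icc (0:ℝ) T,
        |U (n + 1) s t - U n s t| ≤ (K * s * t) ^ (n + 1) / ((Nat.factorial (n + 1) : ℝ)) ^ 2) :=
  goursat_picard_existence_general T K hT C hC hCK U hU0 hUrec
end

section
/- The shuffle identity for signatures: for a continuous bounded-variation path X and multi-indices α, β, the product of signature coefficients satisfies S(X)^α · S(X)^β = Σ_{γ ∈ α ⧢ β} S(X)^γ, where the sum is over all shuffles of α and β. -/
open MeasureTheory intervalIntegral

/-- The multiset of shuffles of two words. -/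
def shuffles {α : Type*} : List α → List α → Multiset (List α)
  | [], l => {l}
  | a :: as, [] => {a :: as}
  | a :: as, b :: bs =>
      ((shuffles as (b :: bs)).map (List.cons a)) + ((shuffles (a :: as) bs).map (List.cons b))

/-!
Fix the right endpoint `t` and regard each coefficient as a function of the left endpoint `s`:
then `∂ₛ S^{a v}(s, t) = -X'_a(s) S^v(s, t)`, and every coefficient of a nonempty word vanishes at
`s = t`. By the product rule and the fundamental theorem of calculus,
`S^{a v} S^{b w} = ∫ₛᵗ X'_a S^v S^{b w} + ∫ₛᵗ X'_b S^{a v} S^w`. Induction on the pair of words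
turns the two integrands into sums over `v ⧢ b w` and `a v ⧢ w`, and integrating term by term
gives exactly the recursion defining `a v ⧢ b w`.
-/

theorem IntervalIntegrable.multisetSum {ι E : Type*} [NormedAddCommGroup E] {μ : Measure ℝ}
    {a b : ℝ} {m : Multiset ι} {f : ι → ℝ → E} (h : ∀ i ∈ m, IntervalIntegrable (f i) μ a b) :
    IntervalIntegrable (fun x => (m.map fun i => f i x).sum) μ a b := by
  induction m using Multiset.induction_on with
  | empty => exact IntervalIntegrable.zero
  | cons i m ih =>
    simp only [Multiset.map_cons, Multiset.sum_cons]
    exact (h i (Multiset.mem_cons_self i m)).add (ih fun j hj => h j (Multiset.mem_cons_of_mem hj))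

theorem intervalIntegral.integral_multisetSum {ι E : Type*} [NormedAddCommGroup E]
    [NormedSpace ℝ E] {μ : Measure ℝ} {a b : ℝ} {m : Multiset ι} {f : ι → ℝ → E}
    (h : ∀ i ∈ m, IntervalIntegrable (f i) μ a b) :
    ∫ x in a..b, (m.map fun i => f i x).sum ∂μ = (m.map fun i => ∫ x in a..b, f i x ∂μ).sum := by
  induction m using Multiset.induction_on with
  | empty => simp
  | cons i m ih =>
    have hm : ∀ j ∈ m, IntervalIntegrable (f j) μ a b := fun j hj =>
      h j (Multiset.mem_cons_of_mem hj)
    simp only [Multiset.map_cons, Multiset.sum_cons]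
    rw [integral_add (h i (Multiset.mem_cons_self i m)) (IntervalIntegrable.multisetSum hm), ih hm]

theorem Continuous.integral_hasDerivAt_left {E : Type*} [NormedAddCommGroup E] [NormedSpace ℝ E]
    [CompleteSpace E] {f : ℝ → E} (hf : Continuous f) (a b : ℝ) :
    HasDerivAt (fun u => ∫ x in u..b, f x) (-f a) a :=
  intervalIntegral.integral_hasDerivAt_left (hf.intervalIntegrable _ _)
    (hf.stronglyMeasurableAtFilter _ _) hf.continuousAt

theorem sum_map_shuffles_cons_cons {α M : Type*} [AddCommMonoid M] (f : List α → M)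
    (a b : α) (v w : List α) :
    ((shuffles (a :: v) (b :: w)).map f).sum =
      ((shuffles v (b :: w)).map fun γ => f (a :: γ)).sum +
        ((shuffles (a :: v) w).map fun γ => f (b :: γ)).sum := by
  simp [shuffles, Multiset.map_map]

section Signature

variable {d : ℕ} {X : ℝ → Fin d → ℝ}

theorem continuous_sig_left (hX : ∀ a, Continuous (deriv fun r => X r a)) (w : List (Fin d))
    (t : ℝ) : Continuous fun s => sig X w s t := by
  induction w with
  | nil => exact continuous_const
  | cons a w ih =>
    exact continuous_iff_continuousAt.2 fun s =>
      (((hX a).mul ih).integral_hasDerivAt_left s t).continuousAt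

theorem hasDerivAt_sig_cons_left (hX : ∀ a, Continuous (deriv fun r => X r a)) (a : Fin d)
    (w : List (Fin d)) (s t : ℝ) :
    HasDerivAt (fun s => sig X (a :: w) s t) (-(deriv (fun r => X r a) s * sig X w s t)) s :=
  ((hX a).mul (continuous_sig_left hX w t)).integral_hasDerivAt_left s t

theorem sig_cons_mul_sig_cons (hX : ∀ a, Continuous (deriv fun r => X r a)) (a b : Fin d)
    (v w : List (Fin d)) (s t : ℝ) :
    sig X (a :: v) s t * sig X (b :: w) s t =
      (∫ u in s..t, deriv (fun r => X r a) u * (sig X v u t * sig X (b :: w) u t)) +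
        ∫ u in s..t, deriv (fun r => X r b) u * (sig X (a :: v) u t * sig X w u t) := by
  have hF : Continuous fun u => deriv (fun r => X r a) u * (sig X v u t * sig X (b :: w) u t) :=
    (hX a).mul ((continuous_sig_left hX v t).mul (continuous_sig_left hX (b :: w) t))
  have hG : Continuous fun u => deriv (fun r => X r b) u * (sig X (a :: v) u t * sig X w u t) :=
    (hX b).mul ((continuous_sig_left hX (a :: v) t).mul (continuous_sig_left hX w t))
  have hprod : ∀ u ∈ Set.uIcc s t, HasDerivAt (fun s => sig X (a :: v) s t * sig X (b :: w) s t)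
      (-(deriv (fun r => X r a) u * (sig X v u t * sig X (b :: w) u t) +
        deriv (fun r => X r b) u * (sig X (a :: v) u t * sig X w u t))) u := fun u _ => by
    refine ((hasDerivAt_sig_cons_left hX a v u t).mul
      (hasDerivAt_sig_cons_left hX b w u t)).congr_deriv ?_
    ring
  have hFTC := integral_eq_sub_of_hasDerivAt hprod ((hF.add hG).neg.intervalIntegrable s t)
  have hvanish : sig X (a :: v) t t = 0 := integral_same
  rw [intervalIntegral.integral_neg, hvanish, zero_mul, zero_sub, neg_inj] at hFTC
  rw [← hFTC,
    intervalIntegral.integral_add (hF.intervalIntegrable s t) (hG.intervalIntegrable s t)]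

theorem sum_map_sig_cons (hX : ∀ a, Continuous (deriv fun r => X r a)) (a : Fin d)
    (m : Multiset (List (Fin d))) (s t : ℝ) :
    (m.map fun w => sig X (a :: w) s t).sum =
      ∫ u in s..t, deriv (fun r => X r a) u * (m.map fun w => sig X w u t).sum := by
  have hint : ∀ w ∈ m,
      IntervalIntegrable (fun u => deriv (fun r => X r a) u * sig X w u t) volume s t :=
    fun w _ => ((hX a).mul (continuous_sig_left hX w t)).intervalIntegrable s t
  simp_rw [← Multiset.sum_map_mul_left]
  rw [integral_multisetSum hint]
  rfl

theorem sig_mul_sig (hX : ∀ a, Continuous (deriv fun r => X r a)) (α β : List (Fin d))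
    (s t : ℝ) : sig X α s t * sig X β s t = ((shuffles α β).map fun w => sig X w s t).sum := by
  induction α generalizing β s t with
  | nil => simp [shuffles, sig]
  | cons a v ihα =>
    induction β generalizing s t with
    | nil => simp [shuffles, sig]
    | cons b w ihβ =>
      simp_rw [sig_cons_mul_sig_cons hX, ihα, ihβ]
      rw [sum_map_shuffles_cons_cons, sum_map_sig_cons hX, sum_map_sig_cons hX]

end Signature

theorem signature_shuffle_identity_general {d : ℕ} (T : ℝ)
    (X : ℝ → Fin d → ℝ) (hX : ∀ a : Fin d, ContDiff ℝ 1 (fun t => X t a))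
    (α β : List (Fin d)) :
    sig X α 0 T * sig X β 0 T
      = ((shuffles α β).map (fun w => sig X w 0 T)).sum :=
  sig_mul_sig (fun a => (hX a).continuous_deriv le_rfl) α β 0 T

/-- The shuffle identity for signatures: `S(X)^α · S(X)^β = Σ_{γ ∈ α ⧢ β} S(X)^γ`. -/
theorem signature_shuffle_identity {d : ℕ} (T : ℝ) (hT : 0 ≤ T)
    (X : ℝ → Fin d → ℝ) (hX : ∀ a : Fin d, ContDiff ℝ 1 (fun t => X t a))
    (α β : List (Fin d)) :
    sig X α 0 T * sig X β 0 T
      = ((shuffles α β).map (fun w => sig X w 0 T)).sum :=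
  signature_shuffle_identity_general T X hX α β
end

section
/- Duhamel/variation-of-parameters formula for the inhomogeneous Goursat problem: if U solves ∂²U/∂s∂t = C(s,t)U with U(0,·)=U(·,0)=1 and A_{s,t}(u,v) denotes the solution of the homogeneous problem started at (u,v), i.e. A satisfies ∂²A_{s,t}(u,v)/∂s∂t = C(s,t)A_{s,t}(u,v) with A=1 on {s=u}∪{t=v}, then the unique solution of ∂²V/∂s∂t = C(s,t)V + G(s,t) with V(0,·)=V(·,0)=0 is V(s,t) = ∫_0^s∫_0^t A_{s,t}(u,v) G(u,v) du dv; in the signature-kernel case G(u,v) = (γ̇_u·Ẏ_v)U(u,v), giving V(s,t)=∫_0^s∫_0^t A_{s,t}(u,v)U(u,v)(γ̇_u·Ẏ_v)dudv. -/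
open MeasureTheory intervalIntegral Set

namespace GoursatAux


lemma abs_int_mono_le {a b : ℝ} (hab : a ≤ b) {g h : ℝ → ℝ}
    (hg : IntervalIntegrable g volume a b) (hh : IntervalIntegrable h volume a b)
    (h0 : ∀ x ∈ Set.uIcc a b, 0 ≤ g x) (hle : ∀ x ∈ Set.uIcc a b, g x ≤ h x) :
    |∫ x in a..b, g x| ≤ |∫ x in a..b, h x| := by
  have huIcc : Set.uIcc a b = Set.Icc a b := Set.uIcc_of_le hab
  have hg0 : 0 ≤ ∫ x in a..b, g x :=
    intervalIntegral.integral_nonneg hab (fun x hx => h0 x (by rw [huIcc]; exact hx))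
  have hmono : (∫ x in a..b, g x) ≤ ∫ x in a..b, h x :=
    intervalIntegral.integral_mono_on hab hg hh (fun x hx => hle x (by rw [huIcc]; exact hx))
  rw [abs_of_nonneg hg0, abs_of_nonneg (le_trans hg0 hmono)]
  exact hmono

lemma abs_int_mono {a b : ℝ} {g h : ℝ → ℝ}
    (hg : IntervalIntegrable g volume a b) (hh : IntervalIntegrable h volume a b)
    (h0 : ∀ x ∈ Set.uIcc a b, 0 ≤ g x) (hle : ∀ x ∈ Set.uIcc a b, g x ≤ h x) :
    |∫ x in a..b, g x| ≤ |∫ x in a..b, h x| := by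
  rcases le_total a b with hab | hab
  · exact abs_int_mono_le hab hg hh h0 hle
  · rw [intervalIntegral.integral_symm b a (f := g), intervalIntegral.integral_symm b a (f := h),
      abs_neg, abs_neg]
    exact abs_int_mono_le hab hg.symm hh.symm
      (fun x hx => h0 x (by rwa [Set.uIcc_comm])) (fun x hx => hle x (by rwa [Set.uIcc_comm]))

lemma int_abs_pow0 (k : ℕ) (x : ℝ) :
    ∫ v in (0:ℝ)..x, |v| ^ k = x * |x| ^ k / (k + 1) := by
  rcases le_or_gt 0 x with hx | hx
  · have : ∫ v in (0:ℝ)..x, |v| ^ k = ∫ v in (0:ℝ)..x, v ^ k := by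
      apply intervalIntegral.integral_congr
      intro v hv
      rw [Set.uIcc_of_le hx] at hv
      simp only []
      rw [abs_of_nonneg hv.1]
    rw [this, integral_pow, abs_of_nonneg hx]
    push_cast
    ring
  · have h1 : ∫ v in (0:ℝ)..x, |v| ^ k = -∫ v in x..(0:ℝ), |v| ^ k := by
      rw [← intervalIntegral.integral_symm]
    have h2 : ∫ v in x..(0:ℝ), |v| ^ k = ∫ v in x..(0:ℝ), (-v) ^ k := by
      apply intervalIntegral.integral_congr
      intro v hv
      rw [Set.uIcc_of_le hx.le] at hv
      simp only []
      rw [abs_of_nonpos hv.2]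
    have h3 : ∫ v in x..(0:ℝ), (-v) ^ k = ∫ v in (0:ℝ)..(-x), v ^ k := by
      simpa using intervalIntegral.integral_comp_neg (a := x) (b := 0) (fun v => v ^ k)
    rw [h1, h2, h3, integral_pow, abs_of_nonpos hx.le]
    push_cast
    ring
  
lemma int_abs_pow (k : ℕ) (q t : ℝ) :
    ∫ v in q..t, |v - q| ^ k = (t - q) * |t - q| ^ k / (k + 1) := by
  have := intervalIntegral.integral_comp_sub_right (a := q) (b := t) (fun v => |v| ^ k) q
  simp only [sub_self] at this
  rw [this, int_abs_pow0]

lemma abs_int_abs_pow (k : ℕ) (q t : ℝ) :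
    |∫ v in q..t, |v - q| ^ k| = |t - q| ^ (k + 1) / (k + 1) := by
  rw [int_abs_pow, abs_div, abs_mul, abs_pow, abs_abs, ← pow_succ']
  congr 1
  rw [abs_of_nonneg]
  positivity

lemma poly_cont (q : ℝ) (m : ℕ) (c : ℕ → ℝ) :
    Continuous (fun v : ℝ => ∑ k ∈ Finset.range m, c k * |v - q| ^ k) := by
  apply continuous_finset_sum
  intro k _
  exact continuous_const.mul (((continuous_id.sub continuous_const).abs).pow k)

lemma poly_int_bound (m : ℕ) (q t : ℝ) (c : ℕ → ℝ) (hc : ∀ k, 0 ≤ c k) :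
    |∫ v in q..t, ∑ k ∈ Finset.range m, c k * |v - q| ^ k| ≤
      ∑ k ∈ Finset.range m, c k * (|t - q| ^ (k + 1) / (k + 1)) := by
  have hint : ∀ k : ℕ, IntervalIntegrable (fun v => c k * |v - q| ^ k) volume q t :=
    fun k => (continuous_const.mul (((continuous_id.sub continuous_const).abs).pow k)).intervalIntegrable _ _
  rw [intervalIntegral.integral_finset_sum (fun k _ => hint k)]
  refine (Finset.abs_sum_le_sum_abs _ _).trans ?_
  apply Finset.sum_le_sum
  intro k _
  rw [intervalIntegral.integral_const_mul, abs_mul, abs_of_nonneg (hc k), abs_int_abs_pow]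

lemma gron (T K' ε : ℝ) (hT : 0 ≤ T) (hK : 0 ≤ K') (hε : 0 ≤ ε) {p q : ℝ}
    (hp : p ∈ Icc (0:ℝ) T) (hq : q ∈ Icc (0:ℝ) T) (f : ℝ → ℝ → ℝ)
    (hf : Continuous (Function.uncurry f))
    (hyp : ∀ s ∈ Icc (0:ℝ) T, ∀ t ∈ Icc (0:ℝ) T,
      |f s t| ≤ ε + K' * abs (∫ u in p..s, abs (∫ v in q..t, |f u v|))) :
    ∀ s ∈ Icc (0:ℝ) T, ∀ t ∈ Icc (0:ℝ) T, |f s t| ≤ ε * Real.exp (K' * T * T) := by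
  classical
  obtain ⟨M₀, hM₀⟩ := (isCompact_Icc.prod isCompact_Icc).exists_bound_of_continuousOn
    hf.continuousOn
  set M : ℝ := max M₀ 0 with hMdef
  have hM0 : 0 ≤ M := le_max_right _ _
  have hM : ∀ s ∈ Icc (0:ℝ) T, ∀ t ∈ Icc (0:ℝ) T, |f s t| ≤ M := by
    intro s hs t ht
    have h := hM₀ (s, t) (Set.mk_mem_prod hs ht)
    rw [Real.norm_eq_abs] at h
    exact h.trans (le_max_left _ _)
  set a : ℕ → ℝ := fun k => K' ^ k / ((k.factorial : ℝ) * (k.factorial : ℝ)) with hadef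
  have ha0 : a 0 = 1 := by simp [hadef]
  have hapos : ∀ k, 0 ≤ a k := by
    intro k
    apply div_nonneg (pow_nonneg hK k)
    positivity
  have ha_succ : ∀ k : ℕ, a (k + 1) = K' * a k / (((k:ℝ) + 1) * ((k:ℝ) + 1)) := by
    intro k
    simp only [hadef, pow_succ, Nat.factorial_succ]
    push_cast
    field_simp
  -- coefficient function
  set co : ℕ → ℕ → ℝ := fun n k => (if k = n then M else ε) * a k with hcodef
  have hco0 : ∀ n k, 0 ≤ co n k := by
    intro n k
    apply mul_nonneg _ (hapos k)
    split <;> assumption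
  -- the key induction
  have key : ∀ n : ℕ, ∀ s ∈ Icc (0:ℝ) T, ∀ t ∈ Icc (0:ℝ) T,
      |f s t| ≤ ∑ k ∈ Finset.range (n + 1), co n k * (|s - p| ^ k * |t - q| ^ k) := by
    intro n
    induction n with
    | zero =>
      intro s hs t ht
      simpa [hcodef, ha0] using hM s hs t ht
    | succ n IH =>
      intro s hs t ht
      -- continuity of the inner parametric integral
      have habsf : Continuous (Function.uncurry fun u v => |f u v|) := hf.abs
      have hgcont : Continuous (fun u => ∫ v in q..t, |f u v|) :=
        intervalIntegral.continuous_parametric_intervalIntegral_of_continuous' habsf q t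
      -- the inner comparison polynomial
      have hBle : ∀ u ∈ Set.uIcc p s,
          abs (∫ v in q..t, |f u v|) ≤
            ∑ k ∈ Finset.range (n + 1),
              (co n k * |u - p| ^ k) * (|t - q| ^ (k + 1) / (k + 1)) := by
        intro u hu
        have hu' : u ∈ Icc (0:ℝ) T := Set.ordConnected_Icc.uIcc_subset hp hs hu
        have h1 : abs (∫ v in q..t, |f u v|) ≤
            |∫ v in q..t, ∑ k ∈ Finset.range (n + 1), (co n k * |u - p| ^ k) * |v - q| ^ k| := by
          apply abs_int_mono
          · exact ((hf.comp (Continuous.prodMk_right u)).abs).intervalIntegrable _ _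
          · exact (poly_cont q (n+1) _).intervalIntegrable _ _
          · intro v _; positivity
          · intro v hv
            have hv' : v ∈ Icc (0:ℝ) T := Set.ordConnected_Icc.uIcc_subset hq ht hv
            calc |f u v| ≤ ∑ k ∈ Finset.range (n + 1), co n k * (|u - p| ^ k * |v - q| ^ k) :=
                  IH u hu' v hv'
              _ = ∑ k ∈ Finset.range (n + 1), (co n k * |u - p| ^ k) * |v - q| ^ k := by
                  apply Finset.sum_congr rfl; intro k _; ring
        exact h1.trans (poly_int_bound (n+1) q t _ (fun k => mul_nonneg (hco0 n k) (by positivity)))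
      -- outer comparison
      have h2 : abs (∫ u in p..s, abs (∫ v in q..t, |f u v|)) ≤
          |∫ u in p..s, ∑ k ∈ Finset.range (n + 1),
            (co n k * (|t - q| ^ (k + 1) / (k + 1))) * |u - p| ^ k| := by
        apply abs_int_mono
        · exact hgcont.abs.intervalIntegrable _ _
        · exact (poly_cont p (n+1) _).intervalIntegrable _ _
        · intro u _; positivity
        · intro u hu
          refine (hBle u hu).trans_eq ?_
          apply Finset.sum_congr rfl; intro k _; ring
      have h3 : |∫ u in p..s, ∑ k ∈ Finset.range (n + 1),
            (co n k * (|t - q| ^ (k + 1) / (k + 1))) * |u - p| ^ k| ≤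
          ∑ k ∈ Finset.range (n + 1),
            (co n k * (|t - q| ^ (k + 1) / (k + 1))) * (|s - p| ^ (k + 1) / (k + 1)) :=
        poly_int_bound (n+1) p s _ (fun k => mul_nonneg (hco0 n k) (by positivity))
      have h4 : |f s t| ≤ ε + K' * (∑ k ∈ Finset.range (n + 1),
          (co n k * (|t - q| ^ (k + 1) / (k + 1))) * (|s - p| ^ (k + 1) / (k + 1))) := by
        refine (hyp s hs t ht).trans ?_
        have := (h2.trans h3)
        nlinarith [abs_nonneg (∫ u in p..s, abs (∫ v in q..t, |f u v|))]
      refine h4.trans (le_of_eq ?_)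
      rw [Finset.sum_range_succ' (fun k => co (n+1) k * (|s - p| ^ k * |t - q| ^ k)) (n+1),
        Finset.mul_sum]
      simp only [pow_zero, mul_one]
      have hco00 : co (n + 1) 0 = ε := by
        simp [hcodef, ha0, Nat.succ_ne_zero]
      rw [hco00, add_comm (∑ _k ∈ _, _) ε]
      congr 1
      apply Finset.sum_congr rfl
      intro k _
      have hifeq : (if k + 1 = n + 1 then M else ε) = (if k = n then M else ε) := by
        simp [Nat.succ_inj]
      simp only [hcodef, hifeq, ha_succ k]
      field_simp
  -- pass to the limit
  intro s hs t ht
  set z : ℝ := K' * |s - p| * |t - q| with hzdef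
  have hz0 : 0 ≤ z := by positivity
  have hzT : z ≤ K' * T * T := by
    have h1 : |s - p| ≤ T := by
      rw [abs_sub_le_iff]; constructor <;> linarith [hs.1, hs.2, hp.1, hp.2]
    have h2 : |t - q| ≤ T := by
      rw [abs_sub_le_iff]; constructor <;> linarith [ht.1, ht.2, hq.1, hq.2]
    calc z = K' * |s - p| * |t - q| := rfl
      _ ≤ K' * T * T := by
          apply mul_le_mul (mul_le_mul_of_nonneg_left h1 hK) h2 (abs_nonneg _)
          positivity
  have hterm : ∀ k : ℕ, a k * (|s - p| ^ k * |t - q| ^ k) ≤ z ^ k / (k.factorial : ℝ) := by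
    intro k
    have hzk : a k * (|s - p| ^ k * |t - q| ^ k) = z ^ k / ((k.factorial : ℝ) * k.factorial) := by
      simp only [hadef, hzdef]
      rw [mul_pow, mul_pow]
      ring
    rw [hzk]
    have hb : (0:ℝ) < (k.factorial : ℝ) := by exact_mod_cast k.factorial_pos
    have hc : (k.factorial : ℝ) ≤ (k.factorial : ℝ) * k.factorial :=
      le_mul_of_one_le_right hb.le (by exact_mod_cast k.factorial_pos)
    exact div_le_div_of_nonneg_left (pow_nonneg hz0 k) hb hc
  have hbound : ∀ n : ℕ, |f s t| ≤ ε * Real.exp (K' * T * T) + M * (z ^ n / (n.factorial : ℝ)) := by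
    intro n
    refine (key n s hs t ht).trans ?_
    rw [Finset.sum_range_succ]
    have hsum : ∑ k ∈ Finset.range n, co n k * (|s - p| ^ k * |t - q| ^ k) ≤
        ε * Real.exp (K' * T * T) := by
      have e1 : ∀ k ∈ Finset.range n, co n k * (|s - p| ^ k * |t - q| ^ k) ≤
          ε * (z ^ k / (k.factorial : ℝ)) := by
        intro k hk
        have hkn : k ≠ n := (Finset.mem_range.1 hk).ne
        have hco : co n k = ε * a k := by simp [hcodef, hkn]
        rw [hco, mul_assoc]
        exact mul_le_mul_of_nonneg_left (hterm k) hε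
      refine (Finset.sum_le_sum e1).trans ?_
      rw [← Finset.mul_sum]
      apply mul_le_mul_of_nonneg_left _ hε
      exact (Real.sum_le_exp_of_nonneg hz0 n).trans (Real.exp_le_exp.2 hzT)
    have e2 : co n n * (|s - p| ^ n * |t - q| ^ n) ≤ M * (z ^ n / (n.factorial : ℝ)) := by
      have hco : co n n = M * a n := by simp [hcodef]
      rw [hco, mul_assoc]
      exact mul_le_mul_of_nonneg_left (hterm n) hM0
    linarith
  have htend : Filter.Tendsto
      (fun n : ℕ => ε * Real.exp (K' * T * T) + M * (z ^ n / (n.factorial : ℝ)))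
      Filter.atTop (nhds (ε * Real.exp (K' * T * T))) := by
    have h0 : Filter.Tendsto (fun n : ℕ => z ^ n / (n.factorial : ℝ)) Filter.atTop (nhds 0) :=
      FloorSemiring.tendsto_pow_div_factorial_atTop z
    have := (h0.const_mul M).const_add (ε * Real.exp (K' * T * T))
    simpa using this
  exact ge_of_tendsto' htend hbound



/-- Rectangle Fubini for interval integrals, `a ≤ b`, `c ≤ d`. -/
lemma rect_swap {a b c d : ℝ} (hab : a ≤ b) (hcd : c ≤ d) {f : ℝ → ℝ → ℝ}
    (hf : IntegrableOn (Function.uncurry f) (Ioc a b ×ˢ Ioc c d)) :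
    ∫ x in a..b, ∫ y in c..d, f x y = ∫ y in c..d, ∫ x in a..b, f x y := by
  have h1 : ∀ x : ℝ, (∫ y in c..d, f x y) = ∫ y in Ioc c d, f x y :=
    fun x => intervalIntegral.integral_of_le hcd
  have h2 : ∀ y : ℝ, (∫ x in a..b, f x y) = ∫ x in Ioc a b, f x y :=
    fun y => intervalIntegral.integral_of_le hab
  rw [intervalIntegral.integral_of_le hab, intervalIntegral.integral_of_le hcd]
  simp_rw [h1, h2]
  have hf' : Integrable (Function.uncurry f)
      ((volume.restrict (Ioc a b)).prod (volume.restrict (Ioc c d))) := by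
    rwa [Measure.prod_restrict]
  exact MeasureTheory.integral_integral_swap hf'



/-- Triangle Fubini: swap `∫₀ˢ du ∫ᵤˢ dx` into `∫₀ˢ dx ∫₀ˣ du`. -/
lemma tri_swap {s : ℝ} (hs : 0 ≤ s) {h : ℝ → ℝ → ℝ} (hh : Continuous (Function.uncurry h)) :
    (∫ u in (0:ℝ)..s, ∫ x in u..s, h u x) = ∫ x in (0:ℝ)..s, ∫ u in (0:ℝ)..x, h u x := by
  classical
  set J : ℝ → ℝ → ℝ := fun u x => if u < x then h u x else 0 with hJdef
  have hslice1 : ∀ u α β : ℝ, IntervalIntegrable (fun x => J u x) volume α β := by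
    intro u α β
    have : (fun x => J u x) = Set.indicator (Ioi u) (fun x => h u x) := by
      funext x
      simp [hJdef, Set.indicator_apply, Set.mem_Ioi]
    rw [this, intervalIntegrable_iff]
    exact ((hh.comp (Continuous.prodMk_right u)).intervalIntegrable α β).def'.indicator
      measurableSet_Ioi
  have hslice2 : ∀ x α β : ℝ, IntervalIntegrable (fun u => J u x) volume α β := by
    intro x α β
    have : (fun u => J u x) = Set.indicator (Iio x) (fun u => h u x) := by
      funext u
      simp [hJdef, Set.indicator_apply, Set.mem_Iio]
    rw [this, intervalIntegrable_iff]
    exact ((hh.comp (continuous_id.prodMk continuous_const)).intervalIntegrable α β).def'.indicator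
      measurableSet_Iio
  have hbox : IntegrableOn (Function.uncurry J) (Ioc 0 s ×ˢ Ioc 0 s) := by
    have hJind : Function.uncurry J =
        Set.indicator {p : ℝ × ℝ | p.1 < p.2} (Function.uncurry h) := by
      funext p
      simp [hJdef, Function.uncurry, Set.indicator_apply, Set.mem_setOf_eq]
    rw [hJind]
    have hbase : IntegrableOn (Function.uncurry h) (Ioc 0 s ×ˢ Ioc 0 s) := by
      apply (hh.continuousOn.integrableOn_compact (isCompact_Icc.prod isCompact_Icc)).mono_set
      exact Set.prod_mono Ioc_subset_Icc_self Ioc_subset_Icc_self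
    exact hbase.indicator ((isOpen_lt continuous_fst continuous_snd).measurableSet)
  have stepA : (∫ u in (0:ℝ)..s, ∫ x in u..s, h u x) = ∫ u in (0:ℝ)..s, ∫ x in (0:ℝ)..s, J u x := by
    apply intervalIntegral.integral_congr
    intro u hu
    rw [Set.uIcc_of_le hs] at hu
    simp only []
    have hadd : (∫ x in (0:ℝ)..s, J u x) = (∫ x in (0:ℝ)..u, J u x) + ∫ x in u..s, J u x :=
      (intervalIntegral.integral_add_adjacent_intervals (hslice1 u 0 u) (hslice1 u u s)).symm
    have hzero : (∫ x in (0:ℝ)..u, J u x) = 0 := by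
      have heq0 : Set.EqOn (fun x => J u x) (fun _ => (0:ℝ)) (Set.uIcc 0 u) := by
        intro x hx
        rw [Set.uIcc_of_le hu.1] at hx
        simp only [hJdef]
        rw [if_neg (not_lt.2 hx.2)]
      rw [intervalIntegral.integral_congr heq0, intervalIntegral.integral_zero]
    have heq : (∫ x in u..s, J u x) = ∫ x in u..s, h u x := by
      apply intervalIntegral.integral_congr_ae
      filter_upwards with x hx
      rw [Set.uIoc_of_le hu.2] at hx
      simp only [hJdef]
      rw [if_pos hx.1]
    rw [hadd, hzero, heq, zero_add]
  have stepC : (∫ x in (0:ℝ)..s, ∫ u in (0:ℝ)..s, J u x) =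
      ∫ x in (0:ℝ)..s, ∫ u in (0:ℝ)..x, h u x := by
    apply intervalIntegral.integral_congr
    intro x hx
    rw [Set.uIcc_of_le hs] at hx
    simp only []
    have hadd : (∫ u in (0:ℝ)..s, J u x) = (∫ u in (0:ℝ)..x, J u x) + ∫ u in x..s, J u x :=
      (intervalIntegral.integral_add_adjacent_intervals (hslice2 x 0 x) (hslice2 x x s)).symm
    have hzero : (∫ u in x..s, J u x) = 0 := by
      have heq0 : Set.EqOn (fun u => J u x) (fun _ => (0:ℝ)) (Set.uIcc x s) := by
        intro u hu
        rw [Set.uIcc_of_le hx.2] at hu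
        simp only [hJdef]
        rw [if_neg (not_lt.2 hu.1)]
      rw [intervalIntegral.integral_congr heq0, intervalIntegral.integral_zero]
    have heq : (∫ u in (0:ℝ)..x, J u x) = ∫ u in (0:ℝ)..x, h u x := by
      apply intervalIntegral.integral_congr_ae
      have hne : ∀ᵐ u : ℝ, u ≠ x := by
        rw [MeasureTheory.ae_iff]
        simpa using measure_singleton x
      filter_upwards [hne] with u hu hux
      rw [Set.uIoc_of_le hx.1] at hux
      simp only [hJdef]
      rw [if_pos (lt_of_le_of_ne hux.2 hu)]
    rw [hadd, hzero, heq, add_zero]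
  rw [stepA, rect_swap hs hs hbox, stepC]


lemma param_cont {X : Type*} [TopologicalSpace X] {F : X → ℝ → ℝ}
    (hF : Continuous (Function.uncurry F)) {e₁ e₂ : X → ℝ}
    (h1 : Continuous e₁) (h2 : Continuous e₂) :
    Continuous fun x => ∫ y in e₁ x..e₂ x, F x y := by
  have hsl : ∀ (x : X) (a b : ℝ), IntervalIntegrable (F x) volume a b :=
    fun x a b => (hF.comp (Continuous.prodMk_right x)).intervalIntegrable a b
  have hsub : ∀ x, (∫ y in e₁ x..e₂ x, F x y) =
      (∫ y in (0:ℝ)..e₂ x, F x y) - ∫ y in (0:ℝ)..e₁ x, F x y := by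
    intro x
    rw [intervalIntegral.integral_interval_sub_left (hsl x 0 (e₂ x)) (hsl x 0 (e₁ x))]
  have c2 : Continuous fun x => ∫ y in (0:ℝ)..e₂ x, F x y :=
    intervalIntegral.continuous_parametric_intervalIntegral_of_continuous hF h2
  have c1 : Continuous fun x => ∫ y in (0:ℝ)..e₁ x, F x y :=
    intervalIntegral.continuous_parametric_intervalIntegral_of_continuous hF h1
  exact (c2.sub c1).congr (fun x => (hsub x).symm)

lemma chain {Kc : ℝ} (p q s t : ℝ) (hK : 0 ≤ Kc) {f c : ℝ → ℝ → ℝ}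
    (hf : Continuous (Function.uncurry f)) (hc : Continuous (Function.uncurry c))
    (hcK : ∀ x y, |c x y| ≤ Kc) :
    |∫ x in p..s, ∫ y in q..t, f x y * c x y| ≤
      Kc * abs (∫ x in p..s, abs (∫ y in q..t, |f x y|)) := by
  have hfx : ∀ x, Continuous fun y => f x y := fun x => hf.comp (Continuous.prodMk_right x)
  have hcx : ∀ x, Continuous fun y => c x y := fun x => hc.comp (Continuous.prodMk_right x)
  have hfc : Continuous (Function.uncurry fun x y => f x y * c x y) := hf.mul hc
  have habsf : Continuous (Function.uncurry fun x y => |f x y|) := hf.abs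
  have hinner : ∀ x, |∫ y in q..t, f x y * c x y| ≤ Kc * abs (∫ y in q..t, |f x y|) := by
    intro x
    calc |∫ y in q..t, f x y * c x y| ≤ abs (∫ y in q..t, |f x y * c x y|) := by
          simpa only [Real.norm_eq_abs] using
            intervalIntegral.norm_integral_le_abs_integral_norm
              (f := fun y => f x y * c x y) (μ := volume) (a := q) (b := t)
      _ ≤ abs (∫ y in q..t, Kc * |f x y|) := by
          apply abs_int_mono
          · exact ((hfx x).mul (hcx x)).abs.intervalIntegrable _ _
          · exact (continuous_const.mul (hfx x).abs).intervalIntegrable _ _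
          · intro y _; positivity
          · intro y _
            rw [abs_mul, mul_comm]
            exact mul_le_mul_of_nonneg_right (hcK x y) (abs_nonneg _)
      _ = Kc * abs (∫ y in q..t, |f x y|) := by
          rw [intervalIntegral.integral_const_mul, abs_mul, abs_of_nonneg hK]
  have hgcont : Continuous fun x => ∫ y in q..t, |f x y| :=
    param_cont habsf continuous_const continuous_const
  have hIcont : Continuous fun x => ∫ y in q..t, f x y * c x y :=
    param_cont hfc continuous_const continuous_const
  calc |∫ x in p..s, ∫ y in q..t, f x y * c x y|
      ≤ abs (∫ x in p..s, abs (∫ y in q..t, f x y * c x y)) := by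
        simpa only [Real.norm_eq_abs] using
          intervalIntegral.norm_integral_le_abs_integral_norm
            (f := fun x => ∫ y in q..t, f x y * c x y) (μ := volume) (a := p) (b := s)
    _ ≤ abs (∫ x in p..s, Kc * abs (∫ y in q..t, |f x y|)) := by
        apply abs_int_mono
        · exact hIcont.abs.intervalIntegrable _ _
        · exact (continuous_const.mul hgcont.abs).intervalIntegrable _ _
        · intro x _; positivity
        · intro x _; exact hinner x
    _ = Kc * abs (∫ x in p..s, abs (∫ y in q..t, |f x y|)) := by
        rw [intervalIntegral.integral_const_mul, abs_mul, abs_of_nonneg hK]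

end GoursatAux

open GoursatAux

namespace GoursatAux

lemma cont4 {Y : Type*} [TopologicalSpace Y] {A4 : ℝ → ℝ → ℝ → ℝ → ℝ}
    (hA4 : Continuous fun P : (ℝ × ℝ) × ℝ × ℝ => A4 P.1.1 P.1.2 P.2.1 P.2.2)
    {m₁ m₂ m₃ m₄ : Y → ℝ} (h₁ : Continuous m₁) (h₂ : Continuous m₂)
    (h₃ : Continuous m₃) (h₄ : Continuous m₄) :
    Continuous fun z => A4 (m₁ z) (m₂ z) (m₃ z) (m₄ z) :=
  hA4.comp ((h₁.prodMk h₂).prodMk (h₃.prodMk h₄))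

lemma cont2 {Y : Type*} [TopologicalSpace Y] {f : ℝ → ℝ → ℝ}
    (hf : Continuous (Function.uncurry f)) {m₁ m₂ : Y → ℝ}
    (h₁ : Continuous m₁) (h₂ : Continuous m₂) :
    Continuous fun z => f (m₁ z) (m₂ z) :=
  hf.comp (h₁.prodMk h₂)

end GoursatAux


/-- Duhamel / variation-of-parameters formula for the inhomogeneous Goursat problem:
if `A_{s,t}(u,v)` is the homogeneous propagator (Riemann function) of `∂²/∂s∂t − C`,
then the unique solution of `∂²V/∂s∂t = C V + G` with `V(0,·) = V(·,0) = 0` is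
`V(s,t) = ∫₀ˢ∫₀ᵗ A_{s,t}(u,v) G(u,v) dv du`; in the signature-kernel case
`G(u,v) = (γ̇_u·Ẏ_v) U(u,v)`, giving `V(s,t) = ∫₀ˢ∫₀ᵗ A_{s,t}(u,v) U(u,v) (γ̇_u·Ẏ_v) dv du`. -/
theorem goursat_duhamel (T K : ℝ) (hT : 0 ≤ T)
    (C G : ℝ → ℝ → ℝ)
    (hC : ContinuousOn (Function.uncurry C) (Icc 0 T ×ˢ Icc 0 T))
    (hG : ContinuousOn (Function.uncurry G) (Icc 0 T ×ˢ Icc 0 T))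
    (hK : ∀ s ∈ Icc (0:ℝ) T, ∀ t ∈ Icc (0:ℝ) T, |C s t| ≤ K)
    (U : ℝ → ℝ → ℝ)
    (hUcont : ContinuousOn (Function.uncurry U) (Icc 0 T ×ˢ Icc 0 T))
    (hU : ∀ s ∈ Icc (0:ℝ) T, ∀ t ∈ Icc (0:ℝ) T,
      U s t = 1 + ∫ u in (0:ℝ)..s, ∫ v in (0:ℝ)..t, C u v * U u v)
    (A : ℝ → ℝ → ℝ → ℝ → ℝ)
    (hAcont : ∀ u ∈ Icc (0:ℝ) T, ∀ v ∈ Icc (0:ℝ) T,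
      ContinuousOn (fun p : ℝ × ℝ => A p.1 p.2 u v) (Icc 0 T ×ˢ Icc 0 T))
    (hA : ∀ u ∈ Icc (0:ℝ) T, ∀ v ∈ Icc (0:ℝ) T, ∀ s ∈ Icc (0:ℝ) T, ∀ t ∈ Icc (0:ℝ) T,
      A s t u v = 1 + ∫ s' in u..s, ∫ t' in v..t, A s' t' u v * C s' t')
    (V : ℝ → ℝ → ℝ)
    (hVcont : ContinuousOn (Function.uncurry V) (Icc 0 T ×ˢ Icc 0 T))
    (hV : ∀ s ∈ Icc (0:ℝ) T, ∀ t ∈ Icc (0:ℝ) T,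
      V s t = ∫ u in (0:ℝ)..s, ∫ v in (0:ℝ)..t, (C u v * V u v + G u v)) :
    (∀ s ∈ Icc (0:ℝ) T, ∀ t ∈ Icc (0:ℝ) T,
      V s t = ∫ u in (0:ℝ)..s, ∫ v in (0:ℝ)..t, A s t u v * G u v)
    ∧ (∀ c : ℝ → ℝ → ℝ, (∀ u v : ℝ, G u v = c u v * U u v) →
        ∀ s ∈ Icc (0:ℝ) T, ∀ t ∈ Icc (0:ℝ) T,
          V s t = ∫ u in (0:ℝ)..s, ∫ v in (0:ℝ)..t, A s t u v * U u v * c u v) := by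
  classical
  have h0T : (0:ℝ) ∈ Icc (0:ℝ) T := ⟨le_refl 0, hT⟩
  have hK0 : (0:ℝ) ≤ K := (abs_nonneg _).trans (hK 0 h0T 0 h0T)
  set E : ℝ := Real.exp (K * T * T) with hEdef
  have hE0 : (0:ℝ) ≤ E := Real.exp_nonneg _
  -- the clamp onto [0, T]
  set π : ℝ → ℝ := fun x => max 0 (min x T) with hπdef
  have hπcont : Continuous π := continuous_const.max (continuous_id.min continuous_const)
  have hπmem : ∀ x, π x ∈ Icc (0:ℝ) T :=
    fun x => ⟨le_max_left _ _, max_le hT (min_le_right x T)⟩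
  have hπid : ∀ x ∈ Icc (0:ℝ) T, π x = x := by
    intro x hx
    simp only [hπdef]
    rw [min_eq_left hx.2, max_eq_right hx.1]
  have hπlip : ∀ x y : ℝ, |π x - π y| ≤ |x - y| := by
    intro x y
    simp only [hπdef]
    rw [max_comm 0 (min x T), max_comm 0 (min y T)]
    refine (abs_max_sub_max_le_abs _ _ _).trans ?_
    refine (abs_min_sub_min_le_max x T y T).trans ?_
    simp [abs_nonneg]
  have hTd : ∀ a b : ℝ, a ∈ Icc (0:ℝ) T → b ∈ Icc (0:ℝ) T → |a - b| ≤ T := by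
    intro a b ha hb
    rw [abs_sub_le_iff]
    constructor <;> linarith [ha.1, ha.2, hb.1, hb.2]
  -- clamped data
  set Cb : ℝ → ℝ → ℝ := fun x y => C (π x) (π y) with hCbdef
  set Gb : ℝ → ℝ → ℝ := fun x y => G (π x) (π y) with hGbdef
  set Vb : ℝ → ℝ → ℝ := fun x y => V (π x) (π y) with hVbdef
  have hclamp : Continuous fun p : ℝ × ℝ => (π p.1, π p.2) :=
    (hπcont.comp continuous_fst).prodMk (hπcont.comp continuous_snd)
  have hclampmem : ∀ p : ℝ × ℝ, (π p.1, π p.2) ∈ Icc (0:ℝ) T ×ˢ Icc (0:ℝ) T :=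
    fun p => Set.mk_mem_prod (hπmem _) (hπmem _)
  have hCbc : Continuous (Function.uncurry Cb) := hC.comp_continuous hclamp hclampmem
  have hGbc : Continuous (Function.uncurry Gb) := hG.comp_continuous hclamp hclampmem
  have hVbc : Continuous (Function.uncurry Vb) := hVcont.comp_continuous hclamp hclampmem
  have hCbK : ∀ x y, |Cb x y| ≤ K := fun x y => hK _ (hπmem x) _ (hπmem y)
  have hCbeq : ∀ x ∈ Icc (0:ℝ) T, ∀ y ∈ Icc (0:ℝ) T, Cb x y = C x y := by
    intro x hx y hy; simp only [hCbdef]; rw [hπid x hx, hπid y hy]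
  have hGbeq : ∀ x ∈ Icc (0:ℝ) T, ∀ y ∈ Icc (0:ℝ) T, Gb x y = G x y := by
    intro x hx y hy; simp only [hGbdef]; rw [hπid x hx, hπid y hy]
  have hVbeq0 : ∀ x ∈ Icc (0:ℝ) T, ∀ y ∈ Icc (0:ℝ) T, Vb x y = V x y := by
    intro x hx y hy; simp only [hVbdef]; rw [hπid x hx, hπid y hy]
  -- clamped A in its first two arguments, for fixed base point
  have hAfcont : ∀ u ∈ Icc (0:ℝ) T, ∀ v ∈ Icc (0:ℝ) T,
      Continuous (fun p : ℝ × ℝ => A (π p.1) (π p.2) u v) := fun u hu v hv =>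
    (hAcont u hu v hv).comp_continuous hclamp hclampmem
  -- uniform bound for A on the square
  have hAbd : ∀ u ∈ Icc (0:ℝ) T, ∀ v ∈ Icc (0:ℝ) T, ∀ s ∈ Icc (0:ℝ) T, ∀ t ∈ Icc (0:ℝ) T,
      |A s t u v| ≤ E := by
    intro u hu v hv
    have hfc : Continuous (Function.uncurry fun s t => A (π s) (π t) u v) := hAfcont u hu v hv
    have hyp : ∀ s ∈ Icc (0:ℝ) T, ∀ t ∈ Icc (0:ℝ) T,
        |A (π s) (π t) u v| ≤ 1 + K *
          abs (∫ x in u..s, abs (∫ y in v..t, |A (π x) (π y) u v|)) := by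
      intro s hs t ht
      rw [hπid s hs, hπid t ht]
      have heq : A s t u v
          = 1 + ∫ x in u..s, ∫ y in v..t, A (π x) (π y) u v * Cb x y := by
        rw [hA u hu v hv s hs t ht]
        congr 1
        apply intervalIntegral.integral_congr
        intro x hx
        have hx' : x ∈ Icc (0:ℝ) T := Set.ordConnected_Icc.uIcc_subset hu hs hx
        apply intervalIntegral.integral_congr
        intro y hy
        have hy' : y ∈ Icc (0:ℝ) T := Set.ordConnected_Icc.uIcc_subset hv ht hy
        simp only []
        rw [hπid x hx', hπid y hy', hCbeq x hx' y hy']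
      rw [heq]
      have h1 : |1 + ∫ x in u..s, ∫ y in v..t, A (π x) (π y) u v * Cb x y|
          ≤ 1 + |∫ x in u..s, ∫ y in v..t, A (π x) (π y) u v * Cb x y| := by
        calc _ ≤ |(1:ℝ)| + _ := abs_add_le _ _
          _ = 1 + _ := by rw [abs_one]
      refine h1.trans ?_
      have h2 := chain (Kc := K) u v s t hK0
        (f := fun x y => A (π x) (π y) u v) (c := Cb) hfc hCbc hCbK
      linarith
    have hgr := gron T K 1 hT hK0 zero_le_one hu hv _ hfc hyp
    intro s hs t ht
    have h2 := hgr s hs t ht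
    rw [hπid s hs, hπid t ht] at h2
    simpa using h2
  have hAfbd : ∀ u ∈ Icc (0:ℝ) T, ∀ v ∈ Icc (0:ℝ) T, ∀ x y : ℝ, |A (π x) (π y) u v| ≤ E :=
    fun u hu v hv x y => hAbd u hu v hv (π x) (hπmem x) (π y) (hπmem y)
  -- Lipschitz continuity of A in the base point, uniformly in (s, t)
  have hAlip : ∀ u ∈ Icc (0:ℝ) T, ∀ v ∈ Icc (0:ℝ) T, ∀ u' ∈ Icc (0:ℝ) T, ∀ v' ∈ Icc (0:ℝ) T,
      ∀ s ∈ Icc (0:ℝ) T, ∀ t ∈ Icc (0:ℝ) T,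
      |A s t u v - A s t u' v'| ≤ (K * E * T * (|u - u'| + |v - v'|)) * E := by
    intro u hu v hv u' hu' v' hv'
    set ε0 : ℝ := K * E * T * (|u - u'| + |v - v'|) with hε0
    have hε00 : 0 ≤ ε0 := by positivity
    set f : ℝ → ℝ → ℝ := fun s t => A (π s) (π t) u v - A (π s) (π t) u' v' with hfdef
    have hfc : Continuous (Function.uncurry f) := (hAfcont u hu v hv).sub (hAfcont u' hu' v' hv')
    set g : ℝ → ℝ → ℝ := fun x y => A (π x) (π y) u v * Cb x y with hgdef
    set g' : ℝ → ℝ → ℝ := fun x y => A (π x) (π y) u' v' * Cb x y with hg'def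
    have hgc : Continuous (Function.uncurry g) := (hAfcont u hu v hv).mul hCbc
    have hg'c : Continuous (Function.uncurry g') := (hAfcont u' hu' v' hv').mul hCbc
    have hgbd : ∀ x y, |g x y| ≤ E * K := by
      intro x y
      simp only [hgdef]
      rw [abs_mul]
      exact mul_le_mul (hAfbd u hu v hv x y) (hCbK x y) (abs_nonneg _) hE0
    have hIg : ∀ (x a b : ℝ), IntervalIntegrable (g x) volume a b :=
      fun x a b => (hgc.comp (Continuous.prodMk_right x)).intervalIntegrable a b
    have hIg' : ∀ (x a b : ℝ), IntervalIntegrable (g' x) volume a b :=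
      fun x a b => (hg'c.comp (Continuous.prodMk_right x)).intervalIntegrable a b
    have hIG : ∀ (c d : ℝ), Continuous fun x => ∫ y in c..d, g x y :=
      fun c d => param_cont hgc continuous_const continuous_const
    have hIG' : ∀ (c d : ℝ), Continuous fun x => ∫ y in c..d, g' x y :=
      fun c d => param_cont hg'c continuous_const continuous_const
    have hyp : ∀ s ∈ Icc (0:ℝ) T, ∀ t ∈ Icc (0:ℝ) T,
        |f s t| ≤ ε0 + K * abs (∫ x in u'..s, abs (∫ y in v'..t, |f x y|)) := by
      intro s hs t ht
      have heq1 : A s t u v = 1 + ∫ x in u..s, ∫ y in v..t, g x y := by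
        rw [hA u hu v hv s hs t ht]
        congr 1
        apply intervalIntegral.integral_congr
        intro x hx
        have hx' : x ∈ Icc (0:ℝ) T := Set.ordConnected_Icc.uIcc_subset hu hs hx
        apply intervalIntegral.integral_congr
        intro y hy
        have hy' : y ∈ Icc (0:ℝ) T := Set.ordConnected_Icc.uIcc_subset hv ht hy
        simp only [hgdef]
        rw [hπid x hx', hπid y hy', hCbeq x hx' y hy']
      have heq2 : A s t u' v' = 1 + ∫ x in u'..s, ∫ y in v'..t, g' x y := by
        rw [hA u' hu' v' hv' s hs t ht]
        congr 1
        apply intervalIntegral.integral_congr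
        intro x hx
        have hx' : x ∈ Icc (0:ℝ) T := Set.ordConnected_Icc.uIcc_subset hu' hs hx
        apply intervalIntegral.integral_congr
        intro y hy
        have hy' : y ∈ Icc (0:ℝ) T := Set.ordConnected_Icc.uIcc_subset hv' ht hy
        simp only [hg'def]
        rw [hπid x hx', hπid y hy', hCbeq x hx' y hy']
      have hsplit1 : (∫ x in u..s, ∫ y in v..t, g x y)
          = (∫ x in u..u', ∫ y in v..t, g x y) + ∫ x in u'..s, ∫ y in v..t, g x y :=
        (intervalIntegral.integral_add_adjacent_intervals
          ((hIG v t).intervalIntegrable _ _) ((hIG v t).intervalIntegrable _ _)).symm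
      have hsplit2 : (∫ x in u'..s, ∫ y in v..t, g x y)
          = (∫ x in u'..s, ∫ y in v..v', g x y) + ∫ x in u'..s, ∫ y in v'..t, g x y := by
        rw [← intervalIntegral.integral_add
          ((hIG v v').intervalIntegrable _ _) ((hIG v' t).intervalIntegrable _ _)]
        apply intervalIntegral.integral_congr
        intro x _
        simp only []
        exact (intervalIntegral.integral_add_adjacent_intervals
          (hIg x v v') (hIg x v' t)).symm
      have hdiff : (∫ x in u'..s, ∫ y in v'..t, g x y) - (∫ x in u'..s, ∫ y in v'..t, g' x y)
          = ∫ x in u'..s, ∫ y in v'..t, f x y * Cb x y := by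
        rw [← intervalIntegral.integral_sub
          ((hIG v' t).intervalIntegrable _ _) ((hIG' v' t).intervalIntegrable _ _)]
        apply intervalIntegral.integral_congr
        intro x _
        simp only []
        rw [← intervalIntegral.integral_sub (hIg x v' t) (hIg' x v' t)]
        apply intervalIntegral.integral_congr
        intro y _
        simp only [hgdef, hg'def, hfdef]
        ring
      have hfeq : f s t = ((∫ x in u..u', ∫ y in v..t, g x y)
          + ∫ x in u'..s, ∫ y in v..v', g x y)
          + ∫ x in u'..s, ∫ y in v'..t, f x y * Cb x y := by
        have hfst : f s t = A s t u v - A s t u' v' := by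
          simp only [hfdef]
          rw [hπid s hs, hπid t ht]
        rw [hfst, heq1, heq2, hsplit1, hsplit2, ← hdiff]
        ring
      -- bounds on the three pieces
      have hb1 : |∫ x in u..u', ∫ y in v..t, g x y| ≤ K * E * T * |u - u'| := by
        have hin : ∀ x ∈ Set.uIoc u u', ‖∫ y in v..t, g x y‖ ≤ E * K * T := by
          intro x _
          have h3 : ‖∫ y in v..t, g x y‖ ≤ E * K * |t - v| := by
            apply intervalIntegral.norm_integral_le_of_norm_le_const
            intro y _
            rw [Real.norm_eq_abs]
            exact hgbd x y
          exact h3.trans (mul_le_mul_of_nonneg_left (hTd t v ht hv) (by positivity))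
        have h4 := intervalIntegral.norm_integral_le_of_norm_le_const hin
        rw [Real.norm_eq_abs] at h4
        calc |∫ x in u..u', ∫ y in v..t, g x y| ≤ E * K * T * |u' - u| := h4
          _ = K * E * T * |u - u'| := by rw [abs_sub_comm]; ring
      have hb2 : |∫ x in u'..s, ∫ y in v..v', g x y| ≤ K * E * T * |v - v'| := by
        have hin : ∀ x ∈ Set.uIoc u' s, ‖∫ y in v..v', g x y‖ ≤ E * K * |v - v'| := by
          intro x _
          have h3 : ‖∫ y in v..v', g x y‖ ≤ E * K * |v' - v| := by
            apply intervalIntegral.norm_integral_le_of_norm_le_const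
            intro y _
            rw [Real.norm_eq_abs]
            exact hgbd x y
          rw [abs_sub_comm] at h3
          exact h3
        have h4 := intervalIntegral.norm_integral_le_of_norm_le_const hin
        rw [Real.norm_eq_abs] at h4
        calc |∫ x in u'..s, ∫ y in v..v', g x y| ≤ E * K * |v - v'| * |s - u'| := h4
          _ ≤ E * K * |v - v'| * T := by
              apply mul_le_mul_of_nonneg_left (hTd s u' hs hu') (by positivity)
          _ = K * E * T * |v - v'| := by ring
      have hb3 := chain (Kc := K) u' v' s t hK0 (f := f) (c := Cb) hfc hCbc hCbK
      calc |f s t| = |((∫ x in u..u', ∫ y in v..t, g x y)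
            + ∫ x in u'..s, ∫ y in v..v', g x y)
            + ∫ x in u'..s, ∫ y in v'..t, f x y * Cb x y| := by rw [hfeq]
        _ ≤ |(∫ x in u..u', ∫ y in v..t, g x y) + ∫ x in u'..s, ∫ y in v..v', g x y|
            + |∫ x in u'..s, ∫ y in v'..t, f x y * Cb x y| := abs_add_le _ _
        _ ≤ (|∫ x in u..u', ∫ y in v..t, g x y| + |∫ x in u'..s, ∫ y in v..v', g x y|)
            + |∫ x in u'..s, ∫ y in v'..t, f x y * Cb x y| := by
              gcongr
              exact abs_add_le _ _
        _ ≤ ε0 + K * abs (∫ x in u'..s, abs (∫ y in v'..t, |f x y|)) := by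
              rw [hε0]
              have := hb1
              have := hb2
              have := hb3
              linarith
    have hgr := gron T K ε0 hT hK0 hε00 hu' hv' f hfc hyp
    intro s hs t ht
    have h2 := hgr s hs t ht
    simp only [hfdef] at h2
    rw [hπid s hs, hπid t ht] at h2
    exact h2
  -- globally continuous extension of A to the region u ≤ s, v ≤ t
  set Ab : ℝ → ℝ → ℝ → ℝ → ℝ :=
    fun s t u v => A (max (π s) (π u)) (max (π t) (π v)) (π u) (π v) with hAbdef
  have hmaxmem : ∀ x y : ℝ, max (π x) (π y) ∈ Icc (0:ℝ) T :=
    fun x y => ⟨le_trans (hπmem x).1 (le_max_left _ _), max_le (hπmem x).2 (hπmem y).2⟩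
  have hAbbd : ∀ s t u v : ℝ, |Ab s t u v| ≤ E :=
    fun s t u v => hAbd (π u) (hπmem u) (π v) (hπmem v) _ (hmaxmem s u) _ (hmaxmem t v)
  have hAbeq : ∀ {s t u v : ℝ}, s ∈ Icc (0:ℝ) T → t ∈ Icc (0:ℝ) T → u ∈ Icc (0:ℝ) T →
      v ∈ Icc (0:ℝ) T → u ≤ s → v ≤ t → Ab s t u v = A s t u v := by
    intro s t u v hs ht hu hv hus hvt
    simp only [hAbdef]
    rw [hπid u hu, hπid v hv, hπid s hs, hπid t ht, max_eq_left hus, max_eq_left hvt]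
  have hAbcont : Continuous (fun P : (ℝ × ℝ) × ℝ × ℝ => Ab P.1.1 P.1.2 P.2.1 P.2.2) := by
    rw [continuous_iff_continuousAt]
    rintro ⟨⟨s₀, t₀⟩, u₀, v₀⟩
    set base : (ℝ × ℝ) × ℝ × ℝ → ℝ × ℝ :=
      fun P => (max (π P.1.1) (π P.2.1), max (π P.1.2) (π P.2.2)) with hbase
    have hbasec : Continuous base := by
      apply Continuous.prodMk
      · exact (hπcont.comp (continuous_fst.comp continuous_fst)).max
          (hπcont.comp (continuous_fst.comp continuous_snd))
      · exact (hπcont.comp (continuous_snd.comp continuous_fst)).max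
          (hπcont.comp (continuous_snd.comp continuous_snd))
    have hbasemem : ∀ P, base P ∈ Icc (0:ℝ) T ×ˢ Icc (0:ℝ) T :=
      fun P => Set.mk_mem_prod (hmaxmem _ _) (hmaxmem _ _)
    set g0 : (ℝ × ℝ) × ℝ × ℝ → ℝ := fun P => A (base P).1 (base P).2 (π u₀) (π v₀) with hg0
    have hg0c : Continuous g0 :=
      (hAcont (π u₀) (hπmem u₀) (π v₀) (hπmem v₀)).comp_continuous hbasec hbasemem
    have hbnd : ∀ P : (ℝ × ℝ) × ℝ × ℝ, |Ab P.1.1 P.1.2 P.2.1 P.2.2 - g0 P|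
        ≤ (K * E * T * (|P.2.1 - u₀| + |P.2.2 - v₀|)) * E := by
      intro P
      have h1 := hAlip (π P.2.1) (hπmem _) (π P.2.2) (hπmem _) (π u₀) (hπmem _) (π v₀)
        (hπmem _) (base P).1 (hbasemem P).1 (base P).2 (hbasemem P).2
      refine h1.trans ?_
      apply mul_le_mul_of_nonneg_right _ hE0
      apply mul_le_mul_of_nonneg_left _ (by positivity)
      exact add_le_add (hπlip P.2.1 u₀) (hπlip P.2.2 v₀)
    have htend0 : Filter.Tendsto (fun P : (ℝ × ℝ) × ℝ × ℝ =>
        Ab P.1.1 P.1.2 P.2.1 P.2.2 - g0 P) (nhds ((s₀, t₀), (u₀, v₀))) (nhds 0) := by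
      refine squeeze_zero_norm (a := fun P : (ℝ × ℝ) × ℝ × ℝ =>
          (K * E * T * (|P.2.1 - u₀| + |P.2.2 - v₀|)) * E)
        (fun P => by rw [Real.norm_eq_abs]; exact hbnd P) ?_
      have hcontb : Continuous fun P : (ℝ × ℝ) × ℝ × ℝ =>
          (K * E * T * (|P.2.1 - u₀| + |P.2.2 - v₀|)) * E := by
        apply Continuous.mul _ continuous_const
        apply Continuous.mul continuous_const
        exact ((continuous_fst.comp continuous_snd).sub continuous_const).abs.add
          ((continuous_snd.comp continuous_snd).sub continuous_const).abs
      have h5 := hcontb.tendsto ((s₀, t₀), (u₀, v₀))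
      simpa using h5
    have hsum := htend0.add (hg0c.tendsto ((s₀, t₀), (u₀, v₀)))
    simp only [zero_add] at hsum
    have hfun : (fun P : (ℝ × ℝ) × ℝ × ℝ =>
        (Ab P.1.1 P.1.2 P.2.1 P.2.2 - g0 P) + g0 P)
        = fun P : (ℝ × ℝ) × ℝ × ℝ => Ab P.1.1 P.1.2 P.2.1 P.2.2 := by
      funext P; ring
    rw [hfun] at hsum
    exact hsum
  -- the candidate solution
  set Wb : ℝ → ℝ → ℝ :=
    (fun s t => ∫ u in (0:ℝ)..s, ∫ v in (0:ℝ)..t, Ab s t u v * Gb u v) with hWbdef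
  have hWbc : Continuous (Function.uncurry Wb) := by
    apply param_cont (X := ℝ × ℝ)
      (F := fun p u => ∫ v in (0:ℝ)..p.2, Ab p.1 p.2 u v * Gb u v)
      ?_ continuous_const continuous_fst
    apply param_cont (X := (ℝ × ℝ) × ℝ)
      (F := fun w v => Ab w.1.1 w.1.2 w.2 v * Gb w.2 v)
      ?_ continuous_const (continuous_snd.comp continuous_fst)
    exact (cont4 hAbcont (by fun_prop) (by fun_prop) (by fun_prop) (by fun_prop)).mul
      (cont2 hGbc (by fun_prop) (by fun_prop))
  -- the integral equation satisfied by Wb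
  have hWbeq : ∀ s ∈ Icc (0:ℝ) T, ∀ t ∈ Icc (0:ℝ) T,
      Wb s t = (∫ u in (0:ℝ)..s, ∫ v in (0:ℝ)..t, Gb u v)
        + ∫ x in (0:ℝ)..s, ∫ y in (0:ℝ)..t, Cb x y * Wb x y := by
    intro s hs t ht
    have hs0 : (0:ℝ) ≤ s := hs.1
    have ht0 : (0:ℝ) ≤ t := ht.1
    have intOn : ∀ (f2 : ℝ × ℝ → ℝ), Continuous f2 → ∀ a b c d : ℝ,
        IntegrableOn f2 (Ioc a b ×ˢ Ioc c d) := by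
      intro f2 hf2 a b c d
      exact ((hf2.continuousOn).integrableOn_compact
        (isCompact_Icc.prod isCompact_Icc)).mono_set
        (Set.prod_mono Ioc_subset_Icc_self Ioc_subset_Icc_self)
    set P2 : ℝ → ℝ → ℝ := fun u v => ∫ x in u..s, ∫ y in v..t, Ab x y u v * Cb x y with hP2def
    have hABCc : Continuous (fun z : ((ℝ × ℝ) × ℝ) × ℝ =>
        Ab z.1.2 z.2 z.1.1.1 z.1.1.2 * Cb z.1.2 z.2) :=
      (cont4 hAbcont (by fun_prop) (by fun_prop) (by fun_prop) (by fun_prop)).mul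
        (cont2 hCbc (by fun_prop) (by fun_prop))
    have hP2c : Continuous (Function.uncurry P2) := by
      apply param_cont (X := ℝ × ℝ)
        (F := fun w x => ∫ y in w.2..t, Ab x y w.1 w.2 * Cb x y) ?_
        continuous_fst continuous_const
      apply param_cont (X := (ℝ × ℝ) × ℝ)
        (F := fun z y => Ab z.2 y z.1.1 z.1.2 * Cb z.2 y) ?_
        (continuous_snd.comp continuous_fst) continuous_const
      exact hABCc
    have step1 : Wb s t = ∫ u in (0:ℝ)..s, ∫ v in (0:ℝ)..t, (Gb u v + P2 u v * Gb u v) := by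
      rw [hWbdef]
      simp only []
      apply intervalIntegral.integral_congr
      intro u hu
      rw [uIcc_of_le hs0] at hu
      have hu' : u ∈ Icc (0:ℝ) T := ⟨hu.1, hu.2.trans hs.2⟩
      apply intervalIntegral.integral_congr
      intro v hv
      rw [uIcc_of_le ht0] at hv
      have hv' : v ∈ Icc (0:ℝ) T := ⟨hv.1, hv.2.trans ht.2⟩
      simp only []
      rw [hAbeq hs ht hu' hv' hu.2 hv.2, hA u hu' v hv' s hs t ht]
      have hPP : (∫ x in u..s, ∫ y in v..t, A x y u v * C x y) = P2 u v := by
        rw [hP2def]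
        simp only []
        apply intervalIntegral.integral_congr
        intro x hx
        have hx' : x ∈ Icc (0:ℝ) T := Set.ordConnected_Icc.uIcc_subset hu' hs hx
        have hux : u ≤ x := by rw [uIcc_of_le hu.2] at hx; exact hx.1
        apply intervalIntegral.integral_congr
        intro y hy
        have hy' : y ∈ Icc (0:ℝ) T := Set.ordConnected_Icc.uIcc_subset hv' ht hy
        have hvy : v ≤ y := by rw [uIcc_of_le hv.2] at hy; exact hy.1
        simp only []
        rw [hAbeq hx' hy' hu' hv' hux hvy, hCbeq x hx' y hy']
      rw [hPP]
      ring
    have hGsl : ∀ u : ℝ, IntervalIntegrable (fun v => Gb u v) volume 0 t :=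
      fun u => (hGbc.comp (Continuous.prodMk_right u)).intervalIntegrable _ _
    have hPGc : Continuous (Function.uncurry fun u v => P2 u v * Gb u v) := hP2c.mul hGbc
    have hPGsl : ∀ u : ℝ, IntervalIntegrable (fun v => P2 u v * Gb u v) volume 0 t :=
      fun u => (hPGc.comp (Continuous.prodMk_right u)).intervalIntegrable _ _
    have step2 : (∫ u in (0:ℝ)..s, ∫ v in (0:ℝ)..t, (Gb u v + P2 u v * Gb u v))
        = (∫ u in (0:ℝ)..s, ∫ v in (0:ℝ)..t, Gb u v)
          + ∫ u in (0:ℝ)..s, ∫ v in (0:ℝ)..t, P2 u v * Gb u v := by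
      have h1 : ∀ u ∈ Set.uIcc (0:ℝ) s, (∫ v in (0:ℝ)..t, (Gb u v + P2 u v * Gb u v))
          = (∫ v in (0:ℝ)..t, Gb u v) + ∫ v in (0:ℝ)..t, P2 u v * Gb u v :=
        fun u _ => intervalIntegral.integral_add (hGsl u) (hPGsl u)
      rw [intervalIntegral.integral_congr h1]
      exact intervalIntegral.integral_add
        ((param_cont hGbc continuous_const continuous_const).intervalIntegrable _ _)
        ((param_cont hPGc continuous_const continuous_const).intervalIntegrable _ _)
    have step3 : (∫ u in (0:ℝ)..s, ∫ v in (0:ℝ)..t, P2 u v * Gb u v)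
        = ∫ u in (0:ℝ)..s, ∫ v in (0:ℝ)..t, ∫ x in u..s, ∫ y in v..t,
            Ab x y u v * Cb x y * Gb u v := by
      apply intervalIntegral.integral_congr
      intro u _
      apply intervalIntegral.integral_congr
      intro v _
      simp only [hP2def]
      rw [← intervalIntegral.integral_mul_const]
      apply intervalIntegral.integral_congr
      intro x _
      simp only []
      rw [← intervalIntegral.integral_mul_const]
    have step4 : (∫ u in (0:ℝ)..s, ∫ v in (0:ℝ)..t, ∫ x in u..s, ∫ y in v..t,
          Ab x y u v * Cb x y * Gb u v)
        = ∫ u in (0:ℝ)..s, ∫ x in u..s, ∫ v in (0:ℝ)..t, ∫ y in v..t,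
            Ab x y u v * Cb x y * Gb u v := by
      apply intervalIntegral.integral_congr
      intro u hu
      rw [uIcc_of_le hs0] at hu
      simp only []
      apply rect_swap ht0 hu.2
      apply intOn
      apply param_cont (X := ℝ × ℝ)
        (F := fun w y => Ab w.2 y u w.1 * Cb w.2 y * Gb u w.1) ?_
        continuous_fst continuous_const
      exact ((cont4 hAbcont (by fun_prop) (by fun_prop) (by fun_prop) (by fun_prop)).mul
        (cont2 hCbc (by fun_prop) (by fun_prop))).mul
        (cont2 hGbc (by fun_prop) (by fun_prop))
    have step5 : (∫ u in (0:ℝ)..s, ∫ x in u..s, ∫ v in (0:ℝ)..t, ∫ y in v..t,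
          Ab x y u v * Cb x y * Gb u v)
        = ∫ u in (0:ℝ)..s, ∫ x in u..s, ∫ y in (0:ℝ)..t, ∫ v in (0:ℝ)..y,
            Ab x y u v * Cb x y * Gb u v := by
      apply intervalIntegral.integral_congr
      intro u _
      apply intervalIntegral.integral_congr
      intro x _
      simp only []
      apply tri_swap ht0 (h := fun v y => Ab x y u v * Cb x y * Gb u v)
      exact ((cont4 hAbcont (by fun_prop) (by fun_prop) (by fun_prop) (by fun_prop)).mul
        (cont2 hCbc (by fun_prop) (by fun_prop))).mul
        (cont2 hGbc (by fun_prop) (by fun_prop))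
    have step6 : (∫ u in (0:ℝ)..s, ∫ x in u..s, ∫ y in (0:ℝ)..t, ∫ v in (0:ℝ)..y,
          Ab x y u v * Cb x y * Gb u v)
        = ∫ x in (0:ℝ)..s, ∫ u in (0:ℝ)..x, ∫ y in (0:ℝ)..t, ∫ v in (0:ℝ)..y,
            Ab x y u v * Cb x y * Gb u v := by
      apply tri_swap hs0
        (h := fun u x => ∫ y in (0:ℝ)..t, ∫ v in (0:ℝ)..y, Ab x y u v * Cb x y * Gb u v)
      apply param_cont (X := ℝ × ℝ)
        (F := fun w y => ∫ v in (0:ℝ)..y, Ab w.2 y w.1 v * Cb w.2 y * Gb w.1 v) ?_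
        continuous_const continuous_const
      apply param_cont (X := (ℝ × ℝ) × ℝ)
        (F := fun z v => Ab z.1.2 z.2 z.1.1 v * Cb z.1.2 z.2 * Gb z.1.1 v) ?_
        continuous_const continuous_snd
      exact ((cont4 hAbcont (by fun_prop) (by fun_prop) (by fun_prop) (by fun_prop)).mul
        (cont2 hCbc (by fun_prop) (by fun_prop))).mul
        (cont2 hGbc (by fun_prop) (by fun_prop))
    have step7 : (∫ x in (0:ℝ)..s, ∫ u in (0:ℝ)..x, ∫ y in (0:ℝ)..t, ∫ v in (0:ℝ)..y,
          Ab x y u v * Cb x y * Gb u v)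
        = ∫ x in (0:ℝ)..s, ∫ y in (0:ℝ)..t, ∫ u in (0:ℝ)..x, ∫ v in (0:ℝ)..y,
            Ab x y u v * Cb x y * Gb u v := by
      apply intervalIntegral.integral_congr
      intro x hx
      rw [uIcc_of_le hs0] at hx
      simp only []
      apply rect_swap hx.1 ht0
      apply intOn
      apply param_cont (X := ℝ × ℝ)
        (F := fun w v => Ab x w.2 w.1 v * Cb x w.2 * Gb w.1 v) ?_
        continuous_const continuous_snd
      exact ((cont4 hAbcont (by fun_prop) (by fun_prop) (by fun_prop) (by fun_prop)).mul
        (cont2 hCbc (by fun_prop) (by fun_prop))).mul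
        (cont2 hGbc (by fun_prop) (by fun_prop))
    have step8 : (∫ x in (0:ℝ)..s, ∫ y in (0:ℝ)..t, ∫ u in (0:ℝ)..x, ∫ v in (0:ℝ)..y,
          Ab x y u v * Cb x y * Gb u v)
        = ∫ x in (0:ℝ)..s, ∫ y in (0:ℝ)..t, Cb x y * Wb x y := by
      apply intervalIntegral.integral_congr
      intro x _
      apply intervalIntegral.integral_congr
      intro y _
      simp only []
      have h1 : ∀ u ∈ Set.uIcc (0:ℝ) x, (∫ v in (0:ℝ)..y, Ab x y u v * Cb x y * Gb u v)
          = (∫ v in (0:ℝ)..y, Ab x y u v * Gb u v) * Cb x y := by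
        intro u _
        rw [← intervalIntegral.integral_mul_const]
        apply intervalIntegral.integral_congr
        intro v _
        simp only []
        ring
      rw [intervalIntegral.integral_congr h1, intervalIntegral.integral_mul_const, hWbdef]
      simp only []
      ring
    rw [step1, step2]
    congr 1
    rw [step3, step4, step5, step6, step7]
    exact step8
  -- the integral equation satisfied by Vb
  have hVeq2 : ∀ s ∈ Icc (0:ℝ) T, ∀ t ∈ Icc (0:ℝ) T,
      Vb s t = (∫ u in (0:ℝ)..s, ∫ v in (0:ℝ)..t, Gb u v)
        + ∫ x in (0:ℝ)..s, ∫ y in (0:ℝ)..t, Cb x y * Vb x y := by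
    intro s hs t ht
    rw [hVbeq0 s hs t ht, hV s hs t ht]
    have h1 : (∫ u in (0:ℝ)..s, ∫ v in (0:ℝ)..t, (C u v * V u v + G u v))
        = ∫ u in (0:ℝ)..s, ∫ v in (0:ℝ)..t, (Cb u v * Vb u v + Gb u v) := by
      apply intervalIntegral.integral_congr
      intro u hu
      rw [uIcc_of_le hs.1] at hu
      have hu' : u ∈ Icc (0:ℝ) T := ⟨hu.1, hu.2.trans hs.2⟩
      apply intervalIntegral.integral_congr
      intro v hv
      rw [uIcc_of_le ht.1] at hv
      have hv' : v ∈ Icc (0:ℝ) T := ⟨hv.1, hv.2.trans ht.2⟩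
      simp only []
      rw [hCbeq u hu' v hv', hGbeq u hu' v hv', hVbeq0 u hu' v hv']
    rw [h1]
    have hCVc : Continuous (Function.uncurry fun u v => Cb u v * Vb u v) := hCbc.mul hVbc
    have h2 : ∀ u ∈ Set.uIcc (0:ℝ) s, (∫ v in (0:ℝ)..t, (Cb u v * Vb u v + Gb u v))
        = (∫ v in (0:ℝ)..t, Cb u v * Vb u v) + ∫ v in (0:ℝ)..t, Gb u v :=
      fun u _ => intervalIntegral.integral_add
        ((hCVc.comp (Continuous.prodMk_right u)).intervalIntegrable _ _)
        ((hGbc.comp (Continuous.prodMk_right u)).intervalIntegrable _ _)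
    rw [intervalIntegral.integral_congr h2, intervalIntegral.integral_add
      ((param_cont hCVc continuous_const continuous_const).intervalIntegrable _ _)
      ((param_cont hGbc continuous_const continuous_const).intervalIntegrable _ _)]
    ring
  -- uniqueness via Gronwall
  have hDc : Continuous (Function.uncurry fun a b => Vb a b - Wb a b) := hVbc.sub hWbc
  have hDeq : ∀ s ∈ Icc (0:ℝ) T, ∀ t ∈ Icc (0:ℝ) T,
      Vb s t - Wb s t = ∫ x in (0:ℝ)..s, ∫ y in (0:ℝ)..t, (Vb x y - Wb x y) * Cb x y := by
    intro s hs t ht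
    have hCVc : Continuous (Function.uncurry fun x y => Cb x y * Vb x y) := hCbc.mul hVbc
    have hCWc : Continuous (Function.uncurry fun x y => Cb x y * Wb x y) := hCbc.mul hWbc
    rw [hVeq2 s hs t ht, hWbeq s hs t ht]
    have h1 : ((∫ u in (0:ℝ)..s, ∫ v in (0:ℝ)..t, Gb u v)
          + ∫ x in (0:ℝ)..s, ∫ y in (0:ℝ)..t, Cb x y * Vb x y)
        - ((∫ u in (0:ℝ)..s, ∫ v in (0:ℝ)..t, Gb u v)
          + ∫ x in (0:ℝ)..s, ∫ y in (0:ℝ)..t, Cb x y * Wb x y)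
        = (∫ x in (0:ℝ)..s, ∫ y in (0:ℝ)..t, Cb x y * Vb x y)
          - ∫ x in (0:ℝ)..s, ∫ y in (0:ℝ)..t, Cb x y * Wb x y := by ring
    rw [h1, ← intervalIntegral.integral_sub
      ((param_cont hCVc continuous_const continuous_const).intervalIntegrable _ _)
      ((param_cont hCWc continuous_const continuous_const).intervalIntegrable _ _)]
    apply intervalIntegral.integral_congr
    intro x _
    simp only []
    have i1 : IntervalIntegrable (fun y => Cb x y * Vb x y) volume 0 t :=
      (hCVc.comp (Continuous.prodMk_right x)).intervalIntegrable _ _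
    have i2 : IntervalIntegrable (fun y => Cb x y * Wb x y) volume 0 t :=
      (hCWc.comp (Continuous.prodMk_right x)).intervalIntegrable _ _
    rw [← intervalIntegral.integral_sub i1 i2]
    apply intervalIntegral.integral_congr
    intro y _
    simp only []
    ring
  have hVW : ∀ s ∈ Icc (0:ℝ) T, ∀ t ∈ Icc (0:ℝ) T, Vb s t = Wb s t := by
    have hyp : ∀ s ∈ Icc (0:ℝ) T, ∀ t ∈ Icc (0:ℝ) T,
        |Vb s t - Wb s t| ≤ 0 + K *
          abs (∫ x in (0:ℝ)..s, abs (∫ y in (0:ℝ)..t, |Vb x y - Wb x y|)) := by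
      intro s hs t ht
      rw [hDeq s hs t ht, zero_add]
      exact chain 0 0 s t hK0 hDc hCbc hCbK
    have hgr := gron T K 0 hT hK0 le_rfl h0T h0T _ hDc hyp
    intro s hs t ht
    have h2 := hgr s hs t ht
    rw [zero_mul] at h2
    have h3 : |Vb s t - Wb s t| = 0 := le_antisymm h2 (abs_nonneg _)
    have h4 := abs_eq_zero.1 h3
    linarith
  -- main statement
  have hmain : ∀ s ∈ Icc (0:ℝ) T, ∀ t ∈ Icc (0:ℝ) T,
      V s t = ∫ u in (0:ℝ)..s, ∫ v in (0:ℝ)..t, A s t u v * G u v := by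
    intro s hs t ht
    have h1 : V s t = Wb s t := by
      rw [← hVbeq0 s hs t ht]
      exact hVW s hs t ht
    rw [h1, hWbdef]
    simp only []
    apply intervalIntegral.integral_congr
    intro u hu
    rw [uIcc_of_le hs.1] at hu
    have hu' : u ∈ Icc (0:ℝ) T := ⟨hu.1, hu.2.trans hs.2⟩
    apply intervalIntegral.integral_congr
    intro v hv
    rw [uIcc_of_le ht.1] at hv
    have hv' : v ∈ Icc (0:ℝ) T := ⟨hv.1, hv.2.trans ht.2⟩
    simp only []
    rw [hAbeq hs ht hu' hv' hu.2 hv.2, hGbeq u hu' v hv']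
  refine ⟨hmain, ?_⟩
  intro c hc s hs t ht
  rw [hmain s hs t ht]
  apply intervalIntegral.integral_congr
  intro u _
  apply intervalIntegral.integral_congr
  intro v _
  simp only []
  rw [hc u v]
  ring
end
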